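/- arXiv:2504.09766 — 12 statements merged into one kernel-verified Lean document; each statement's English description precedes it below -/
import Mathlib

section
/- Let ψ be a stack W-operator and let ψ̃ = F⁻¹(ψ) be its characteristic set operator. Then ψ is increasing (i.e., f ≤ g implies ψ(f) ≤ ψ(g) for all grey-scale images f, g) if, and only if, ψ̃ is increasing (i.e., X ≤ Y implies ψ̃(X) ≤ ψ̃(Y) for all binary images X, Y). -/
namespace StackMM

variable {E : Type*}

/-- A grey-scale image with maximal intensity `m`. -/
def IsGrey (m : ℕ) (f : E → ℕ) : Prop := ∀ x, f x ≤ m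

/-- A binary image. -/
def IsBinary (X : E → ℕ) : Prop := ∀ x, X x ≤ 1

/-- The threshold (cross-section) of `f` at level `t`. -/
def thresh (t : ℕ) (f : E → ℕ) : E → ℕ := fun x => if t ≤ f x then 1 else 0

/-- An image operator maps grey-scale images to grey-scale images. -/
def IsImageOp (m : ℕ) (ψ : (E → ℕ) → E → ℕ) : Prop :=
  ∀ f, IsGrey m f → IsGrey m (ψ f)

/-- A set operator maps binary images to binary images. -/
def IsSetOp (ψ : (E → ℕ) → E → ℕ) : Prop :=
  ∀ X, IsBinary X → IsBinary (ψ X)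

/-- A stack operator: an image operator mapping grey-scale binary images to grey-scale
binary images which commutes in average with cross-sectioning. -/
def IsStackOp (m : ℕ) (ψ : (E → ℕ) → E → ℕ) : Prop :=
  IsImageOp m ψ ∧
  (∀ X : E → ℕ, IsBinary X → ∀ x, ψ (fun y => m * X y) x = 0 ∨ ψ (fun y => m * X y) x = m) ∧
  (∀ f : E → ℕ, IsGrey m f → ∀ x,
    m * ψ f x = ∑ t ∈ Finset.Icc 1 m, ψ (fun y => m * thresh t f y) x)

/-- `F⁻¹` : the characteristic set operator of a stack operator. -/
def charOp (m : ℕ) (ψ : (E → ℕ) → E → ℕ) : (E → ℕ) → E → ℕ :=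
  fun X x => ψ (fun y => m * X y) x / m

/-- `F` : the stack operator associated with a set operator. -/
def stackOf (m : ℕ) (ψt : (E → ℕ) → E → ℕ) : (E → ℕ) → E → ℕ :=
  fun f x => ∑ t ∈ Finset.Icc 1 m, ψt (thresh t f) x

/-- Restriction of the image `f` to the binary image `V`. -/
def restrictTo (V f : E → ℕ) : E → ℕ := fun y => if V y = 1 then f y else 0

/-- `X` is supported in `χ(W) = {x : W x = 1}`. -/
def SuppIn (W X : E → ℕ) : Prop := ∀ x, W x ≠ 1 → X x = 0

/-- Pointwise infimum of a family in the complete lattice of images bounded by `c`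
(the infimum of the empty family is the top element, the constant image `c`). -/
noncomputable def famInf (c : ℕ) {I : Type} (F : I → E → ℕ) : E → ℕ :=
  fun x => sInf (insert c (Set.range fun i => F i x))

/-- Pointwise supremum of a family in the complete lattice of images bounded by `c`
(the supremum of the empty family is the bottom element, the constant image `0`). -/
noncomputable def famSup {I : Type} (F : I → E → ℕ) : E → ℕ :=
  fun x => sSup (insert 0 (Set.range fun i => F i x))

/-- Erosion on the complete lattice of images bounded by `c` : commutes with infima. -/
def ErosionOn (c : ℕ) (ψ : (E → ℕ) → E → ℕ) : Prop :=
  ∀ (I : Type) (F : I → E → ℕ), (∀ i x, F i x ≤ c) →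
    ψ (famInf c F) = famInf c fun i => ψ (F i)

/-- Dilation : maps suprema to suprema. -/
def DilationOn (c : ℕ) (ψ : (E → ℕ) → E → ℕ) : Prop :=
  ∀ (I : Type) (F : I → E → ℕ), (∀ i x, F i x ≤ c) →
    ψ (famSup F) = famSup fun i => ψ (F i)

/-- Anti-dilation : maps suprema to infima. -/
def AntiDilationOn (c : ℕ) (ψ : (E → ℕ) → E → ℕ) : Prop :=
  ∀ (I : Type) (F : I → E → ℕ), (∀ i x, F i x ≤ c) →
    ψ (famSup F) = famInf c fun i => ψ (F i)

/-- Anti-erosion : maps infima to suprema. -/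
def AntiErosionOn (c : ℕ) (ψ : (E → ℕ) → E → ℕ) : Prop :=
  ∀ (I : Type) (F : I → E → ℕ), (∀ i x, F i x ≤ c) →
    ψ (famInf c F) = famSup fun i => ψ (F i)

variable [AddCommGroup E]

/-- Translation invariance (on images satisfying `P`) : `ψ (f ∘ τ_h) = ψ f ∘ τ_h`. -/
def TransInvOn (P : (E → ℕ) → Prop) (ψ : (E → ℕ) → E → ℕ) : Prop :=
  ∀ f : E → ℕ, P f → ∀ h : E, ψ (fun y => f (y + h)) = fun x => ψ f (x + h)

/-- Locally defined within the window `W` : `ψ f x = ψ (f|_{W ∘ τ_{-x}}) x`. -/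
def LocalOn (P : (E → ℕ) → Prop) (W : E → ℕ) (ψ : (E → ℕ) → E → ℕ) : Prop :=
  ∀ f : E → ℕ, P f → ∀ x : E, ψ f x = ψ (restrictTo (fun y => W (y - x)) f) x

/-- An image W-operator : translation-invariant and locally defined within `W`. -/
def IsWOp (m : ℕ) (W : E → ℕ) (ψ : (E → ℕ) → E → ℕ) : Prop :=
  TransInvOn (IsGrey m) ψ ∧ LocalOn (IsGrey m) W ψ

/-- A set W-operator : translation-invariant and locally defined within `W`. -/
def IsSetWOp (W : E → ℕ) (ψ : (E → ℕ) → E → ℕ) : Prop :=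
  TransInvOn IsBinary ψ ∧ LocalOn IsBinary W ψ

/-- Theorem 1 (1): a stack W-operator is increasing iff its characteristic set operator is. -/
theorem stack_increasing_iff {E : Type*} [AddCommGroup E] [Countable E]
    (m : ℕ) (hm : 0 < m) (W : E → ℕ) (hW : IsBinary W)
    (ψ : (E → ℕ) → E → ℕ) (hstack : IsStackOp m ψ) (hWop : IsWOp m W ψ) :
    (∀ f g : E → ℕ, IsGrey m f → IsGrey m g → (∀ x, f x ≤ g x) →
        ∀ x, ψ f x ≤ ψ g x) ↔
    (∀ X Y : E → ℕ, IsBinary X → IsBinary Y → (∀ x, X x ≤ Y x) →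
        ∀ x, charOp m ψ X x ≤ charOp m ψ Y x) := by
  have hbin : ∀ X : E → ℕ, IsBinary X → ∀ x,
      ψ (fun y => m * X y) x = m * charOp m ψ X x := by
    intro X hX x
    rcases hstack.2.1 X hX x with h | h <;>
      simp [charOp, h, Nat.div_self hm]
  constructor
  · intro hinc X Y hX hY hle x
    apply Nat.div_le_div_right
    exact hinc _ _ (fun y => by simpa using Nat.mul_le_mul_left m (hX y))
      (fun y => by simpa using Nat.mul_le_mul_left m (hY y))
      (fun y => Nat.mul_le_mul_left m (hle y)) x
  · intro hinc f g hf hg hle x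
    have hbf : ∀ t, IsBinary (thresh t f) := by
      intro t y; unfold thresh; split <;> simp
    have hbg : ∀ t, IsBinary (thresh t g) := by
      intro t y; unfold thresh; split <;> simp
    have key : ∀ t, ψ (fun y => m * thresh t f y) x ≤ ψ (fun y => m * thresh t g y) x := by
      intro t
      rw [hbin _ (hbf t), hbin _ (hbg t)]
      refine Nat.mul_le_mul_left m ?_
      refine hinc _ _ (hbf t) (hbg t) (fun y => ?_) x
      unfold thresh
      split
      · rw [if_pos (le_trans (by assumption) (hle y))]
      · simp
    have := (hstack.2.2 f hf x).le.trans
      ((Finset.sum_le_sum fun t _ => key t).trans (hstack.2.2 g hg x).ge)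
    exact Nat.le_of_mul_le_mul_left this hm

end StackMM
end

section
/- Let ψ be a stack W-operator and let ψ̃ = F⁻¹(ψ) be its characteristic set operator. Then ψ is decreasing (i.e., f ≤ g implies ψ(g) ≤ ψ(f) for all grey-scale images f, g) if, and only if, ψ̃ is decreasing (i.e., X ≤ Y implies ψ̃(Y) ≤ ψ̃(X) for all binary images X, Y). -/
namespace StackMM

variable {E : Type*}

variable [AddCommGroup E]

/-- Theorem 1 (2): a stack W-operator is decreasing iff its characteristic set operator is. -/
theorem stack_decreasing_iff {E : Type*} [AddCommGroup E] [Countable E]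
    (m : ℕ) (hm : 0 < m) (W : E → ℕ) (hW : IsBinary W)
    (ψ : (E → ℕ) → E → ℕ) (hstack : IsStackOp m ψ) (hWop : IsWOp m W ψ) :
    (∀ f g : E → ℕ, IsGrey m f → IsGrey m g → (∀ x, f x ≤ g x) →
        ∀ x, ψ g x ≤ ψ f x) ↔
    (∀ X Y : E → ℕ, IsBinary X → IsBinary Y → (∀ x, X x ≤ Y x) →
        ∀ x, charOp m ψ Y x ≤ charOp m ψ X x) := by
  obtain ⟨himg, hbin, hsum⟩ := hstack
  constructor
  · intro hdec X Y hX hY hXY x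
    unfold charOp
    apply Nat.div_le_div_right
    exact hdec _ _ (fun y => by
        calc m * X y ≤ m * 1 := Nat.mul_le_mul_left m (hX y)
        _ = m := Nat.mul_one m)
      (fun y => by
        calc m * Y y ≤ m * 1 := Nat.mul_le_mul_left m (hY y)
        _ = m := Nat.mul_one m)
      (fun y => Nat.mul_le_mul_left m (hXY y)) x
  · intro hdec f g hf hg hfg x
    have key : ∀ t, ψ (fun y => m * thresh t g y) x ≤ ψ (fun y => m * thresh t f y) x := by
      intro t
      have hbf : IsBinary (thresh t f) := fun y => by
        unfold thresh; split <;> simp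
      have hbg : IsBinary (thresh t g) := fun y => by
        unfold thresh; split <;> simp
      have hle : ∀ y, thresh t f y ≤ thresh t g y := fun y => by
        unfold thresh
        split
        · rename_i h
          rw [if_pos (le_trans h (hfg y))]
        · exact Nat.zero_le _
      have h := hdec _ _ hbf hbg hle x
      unfold charOp at h
      rcases hbin _ hbf x with h0 | hm'
      · rcases hbin _ hbg x with g0 | gm
        · rw [g0, h0]
        · exfalso
          rw [h0, gm, Nat.div_self hm, Nat.zero_div] at h
          omega
      · rw [hm']
        rcases hbin _ hbg x with g0 | gm
        · rw [g0]; exact Nat.zero_le _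
        · rw [gm]
    have hmul : m * ψ g x ≤ m * ψ f x := by
      rw [hsum g hg x, hsum f hf x]
      exact Finset.sum_le_sum fun t _ => key t
    exact le_of_mul_le_mul_left hmul hm

end StackMM
end

section
/- Let ψ be a stack W-operator and let ψ̃ = F⁻¹(ψ) be its characteristic set operator. Then ψ is extensive (i.e., f ≤ ψ(f) for every grey-scale image f) if, and only if, ψ̃ is extensive (i.e., X ≤ ψ̃(X) for every binary image X). -/
namespace StackMM

variable {E : Type*}

variable [AddCommGroup E]

/-- Theorem 1 (3): a stack W-operator is extensive iff its characteristic set operator is. -/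
theorem stack_extensive_iff {E : Type*} [AddCommGroup E] [Countable E]
    (m : ℕ) (hm : 0 < m) (W : E → ℕ) (hW : IsBinary W)
    (ψ : (E → ℕ) → E → ℕ) (hstack : IsStackOp m ψ) (hWop : IsWOp m W ψ) :
    (∀ f : E → ℕ, IsGrey m f → ∀ x, f x ≤ ψ f x) ↔
    (∀ X : E → ℕ, IsBinary X → ∀ x, X x ≤ charOp m ψ X x) := by
  obtain ⟨himg, hbin, hsum⟩ := hstack
  constructor
  · intro hext X hX x
    have hgrey : IsGrey m (fun y => m * X y) := fun y =>
      calc m * X y ≤ m * 1 := Nat.mul_le_mul_left m (hX y)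
        _ = m := mul_one m
    unfold charOp
    rcases Nat.lt_or_ge (X x) 1 with h | h
    · simp [Nat.lt_one_iff.mp h]
    · have h1 : X x = 1 := le_antisymm (hX x) h
      have hle : m ≤ ψ (fun y => m * X y) x := by
        have := hext _ hgrey x
        simpa [h1] using this
      rcases hbin _ hX x with h0 | h0
      · omega
      · rw [h0, Nat.div_self hm, h1]
  · intro hext f hf x
    have key : ∀ t ∈ Finset.Icc 1 m, t ≤ f x →
        ψ (fun y => m * thresh t f y) x = m := by
      intro t _ ht
      have hXbin : IsBinary (thresh t f) := fun y => by
        unfold thresh; split <;> omega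
      have := hext _ hXbin x
      have hval : thresh t f x = 1 := by unfold thresh; simp [ht]
      rw [hval] at this
      unfold charOp at this
      rcases hbin _ hXbin x with h0 | h0
      · rw [h0] at this; simp at this
      · exact h0
    have hsub : Finset.Icc 1 (f x) ⊆ Finset.Icc 1 m := by
      apply Finset.Icc_subset_Icc_right (hf x)
    have hlow : f x * m ≤ ∑ t ∈ Finset.Icc 1 m, ψ (fun y => m * thresh t f y) x := by
      have h1 : ∑ t ∈ Finset.Icc 1 (f x), ψ (fun y => m * thresh t f y) x = f x * m := by
        rw [Finset.sum_congr rfl (fun t ht => key t (hsub ht) (Finset.mem_Icc.mp ht).2),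
          Finset.sum_const, Nat.card_Icc, smul_eq_mul]
        congr 1
      rw [← h1]
      exact Finset.sum_le_sum_of_subset hsub
    have hle : f x * m ≤ m * ψ f x := by
      rw [hsum f hf x]; exact hlow
    rw [mul_comm m (ψ f x)] at hle
    exact Nat.le_of_mul_le_mul_right hle hm

end StackMM
end

section
/- Let ψ be a stack W-operator and let ψ̃ = F⁻¹(ψ) be its characteristic set operator. Then ψ is anti-extensive (i.e., ψ(f) ≤ f for every grey-scale image f) if, and only if, ψ̃ is anti-extensive (i.e., ψ̃(X) ≤ X for every binary image X). -/
namespace StackMM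

variable {E : Type*}

variable [AddCommGroup E]

/-- Theorem 1 (4): a stack W-operator is anti-extensive iff its characteristic set operator is. -/
theorem stack_antiExtensive_iff {E : Type*} [AddCommGroup E] [Countable E]
    (m : ℕ) (hm : 0 < m) (W : E → ℕ) (hW : IsBinary W)
    (ψ : (E → ℕ) → E → ℕ) (hstack : IsStackOp m ψ) (hWop : IsWOp m W ψ) :
    (∀ f : E → ℕ, IsGrey m f → ∀ x, ψ f x ≤ f x) ↔
    (∀ X : E → ℕ, IsBinary X → ∀ x, charOp m ψ X x ≤ X x) := by
  constructor
  · intro h X hX x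
    have hg : IsGrey m (fun y => m * X y) := fun y =>
      (Nat.mul_le_mul_left m (hX y)).trans (by simp)
    have := h _ hg x
    simp only [charOp]
    calc ψ (fun y => m * X y) x / m ≤ m * X x / m := Nat.div_le_div_right this
      _ = X x := Nat.mul_div_cancel_left _ hm
  · intro h f hf x
    obtain ⟨him, hbin, hsum⟩ := hstack
    have key : ∀ t, ψ (fun y => m * thresh t f y) x ≤ m * thresh t f x := by
      intro t
      have hbt : IsBinary (thresh t f) := fun y => by unfold thresh; split <;> simp
      rcases hbin (thresh t f) hbt x with h0 | hM
      · simp [h0]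
      · have := h (thresh t f) hbt x
        rw [charOp, hM, Nat.div_self hm] at this
        calc ψ (fun y => m * thresh t f y) x = m * 1 := by rw [hM, mul_one]
          _ ≤ m * thresh t f x := Nat.mul_le_mul_left m this
    have hsumth : ∑ t ∈ Finset.Icc 1 m, thresh t f x = f x := by
      unfold thresh
      have : Finset.filter (fun t => t ≤ f x) (Finset.Icc 1 m) = Finset.Icc 1 (f x) := by
        ext t
        simp only [Finset.mem_filter, Finset.mem_Icc]
        constructor
        · rintro ⟨⟨h1, _⟩, h3⟩; exact ⟨h1, h3⟩
        · rintro ⟨h1, h2⟩; exact ⟨⟨h1, h2.trans (hf x)⟩, h2⟩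
      rw [Finset.sum_ite, this]
      simp
    have : m * ψ f x ≤ m * f x := by
      rw [hsum f hf x]
      calc ∑ t ∈ Finset.Icc 1 m, ψ (fun y => m * thresh t f y) x
          ≤ ∑ t ∈ Finset.Icc 1 m, m * thresh t f x := Finset.sum_le_sum fun t _ => key t
        _ = m * f x := by rw [← Finset.mul_sum, hsumth]
    exact Nat.le_of_mul_le_mul_left this hm

end StackMM
end

section
/- Let ψ be a stack W-operator and let ψ̃ = F⁻¹(ψ) be its characteristic set operator. Then ψ is an erosion (i.e., for every index type I and every family (f_i)_{i∈I} of grey-scale images, ψ(⨅_{i∈I} f_i) = ⨅_{i∈I} ψ(f_i), where infima are taken pointwise in the complete lattice of grey-scale images) if, and only if, ψ̃ is an erosion on binary images (i.e., ψ̃(⨅_{i∈I} X_i) = ⨅_{i∈I} ψ̃(X_i) for every family of binary images). -/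
namespace StackMM

variable {E : Type*}

variable [AddCommGroup E]

/-!
Both directions rest on the fact that the infimum commutes with every monotone map `ℕ → ℕ`:
applied to `n ↦ m * n` and `n ↦ n / m` it transfers erosions from `ψ` to `ψ̃`, and applied
to thresholding it shows `T_t (⋀ fᵢ) = ⋀ T_t fᵢ`. Conversely, an erosion `ψ̃` is monotone, so
`t ↦ ψ̃ (T_t f) x` is an antitone `0/1` sequence whose sum over `1 ≤ t ≤ m` is `ψ f x`; such a
sequence is the threshold sequence of its sum, i.e. `ψ̃ (T_t f) = T_t (ψ f)`. Hence `ψ` is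
recovered from `ψ̃` by stacking, and stacking commutes with infima.
-/

section Lattice

variable {E : Type*}

lemma famInf_le (c : ℕ) {I : Type} (F : I → E → ℕ) (i : I) (x : E) : famInf c F x ≤ F i x :=
  Nat.sInf_le (Set.mem_insert_of_mem _ ⟨i, rfl⟩)

lemma famInf_le_top (c : ℕ) {I : Type} (F : I → E → ℕ) (x : E) : famInf c F x ≤ c :=
  Nat.sInf_le (Set.mem_insert _ _)

lemma famInf_map_of_monotone {φ : ℕ → ℕ} (hφ : Monotone φ) (c : ℕ) {I : Type}
    (F : I → E → ℕ) : (fun x => φ (famInf c F x)) = famInf (φ c) fun i x => φ (F i x) := by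
  funext x
  rw [famInf, famInf, hφ.map_csInf (Set.insert_nonempty _ _),
    Set.image_insert_eq, ← Set.range_comp]
  rfl

lemma thresh_famInf {t c : ℕ} (htc : t ≤ c) {I : Type} (F : I → E → ℕ) :
    thresh t (famInf c F) = famInf 1 fun i => thresh t (F i) := by
  have hmono : Monotone fun n : ℕ => if t ≤ n then 1 else 0 := fun a b hab => by
    dsimp only
    split_ifs <;> omega
  have h := famInf_map_of_monotone hmono c F
  rw [if_pos htc] at h
  exact h

lemma ErosionOn.le_of_le {c : ℕ} {φ : (E → ℕ) → E → ℕ} (hφ : ErosionOn c φ)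
    {X Y : E → ℕ} (hY : ∀ x, Y x ≤ c) (hXY : X ≤ Y) : φ X ≤ φ Y := by
  let F : Bool → E → ℕ := fun b => if b then Y else X
  have hinf : famInf c F = X := funext fun x =>
    le_antisymm (famInf_le c F false x) <| le_csInf (Set.insert_nonempty _ _) <| by
      rintro _ (rfl | ⟨_ | _, rfl⟩)
      exacts [(hXY x).trans (hY x), le_rfl, hXY x]
  have hF : ∀ b x, F b x ≤ c := by
    rintro (_ | _) x
    exacts [(hXY x).trans (hY x), hY x]
  intro x
  rw [← hinf, hφ Bool F hF]
  exact famInf_le c _ true x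

end Lattice

section Thresholds

variable {E : Type*}

lemma sum_Icc_ite_le (m n : ℕ) :
    ∑ s ∈ Finset.Icc 1 m, (if s ≤ n then 1 else 0) = min n m := by
  have : {s ∈ Finset.Icc 1 m | s ≤ n} = Finset.Icc 1 (min n m) := by
    ext s
    simp only [Finset.mem_filter, Finset.mem_Icc, le_min_iff]
    omega
  simp [Finset.sum_boole, this]

lemma eq_ite_le_sum_of_antitone {a : ℕ → ℕ} (ha : Antitone a) (ha1 : ∀ t, a t ≤ 1)
    {m t : ℕ} (ht : t ∈ Finset.Icc 1 m) :
    a t = if t ≤ ∑ s ∈ Finset.Icc 1 m, a s then 1 else 0 := by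
  obtain ⟨ht1, htm⟩ := Finset.mem_Icc.1 ht
  rcases Nat.le_one_iff_eq_zero_or_eq_one.1 (ha1 t) with hat | hat
  · have hsum : ∑ s ∈ Finset.Icc 1 m, a s ≤ t - 1 := calc
      ∑ s ∈ Finset.Icc 1 m, a s ≤ ∑ s ∈ Finset.Icc 1 m, (if s ≤ t - 1 then 1 else 0) := by
        refine Finset.sum_le_sum fun s _ => ?_
        split_ifs with hs
        · exact ha1 s
        · exact (ha (by omega)).trans hat.le
      _ = min (t - 1) m := sum_Icc_ite_le m (t - 1)
      _ ≤ t - 1 := min_le_left _ _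
    rw [hat, if_neg (by omega)]
  · have hsum : t ≤ ∑ s ∈ Finset.Icc 1 m, a s := calc
      t = min t m := (min_eq_left htm).symm
      _ = ∑ s ∈ Finset.Icc 1 m, (if s ≤ t then 1 else 0) := (sum_Icc_ite_le m t).symm
      _ ≤ ∑ s ∈ Finset.Icc 1 m, a s := by
        refine Finset.sum_le_sum fun s _ => ?_
        split_ifs with hs
        · exact hat.ge.trans (ha hs)
        · exact Nat.zero_le _
    rw [hat, if_pos hsum]

lemma sum_thresh {m : ℕ} {f : E → ℕ} (hf : IsGrey m f) (x : E) :
    ∑ t ∈ Finset.Icc 1 m, thresh t f x = f x := by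
  simpa [thresh, min_eq_left (hf x)] using sum_Icc_ite_le m (f x)

lemma isBinary_thresh (t : ℕ) (f : E → ℕ) : IsBinary (thresh t f) := fun x => by
  unfold thresh
  split_ifs <;> omega

lemma thresh_anti {s t : ℕ} (hst : s ≤ t) (f : E → ℕ) : thresh t f ≤ thresh s f :=
  fun x => by
    simp only [thresh]
    split_ifs <;> omega

end Thresholds

section StackOperator

variable {E : Type*} {m : ℕ} {ψ : (E → ℕ) → E → ℕ}

lemma ErosionOn.charOp (hm : 0 < m) (h : ErosionOn m ψ) : ErosionOn 1 (charOp m ψ) := by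
  intro I X hX
  have hmul := famInf_map_of_monotone (φ := (m * ·))
    (fun _ _ hab => Nat.mul_le_mul_left m hab) 1 X
  have hdiv := famInf_map_of_monotone (φ := (· / m))
    (fun _ _ hab => Nat.div_le_div_right hab) m fun i => ψ fun y => m * X i y
  rw [mul_one] at hmul
  rw [Nat.div_self hm] at hdiv
  have hbound : ∀ i x, m * X i x ≤ m := fun i x =>
    mul_le_of_le_one_right (Nat.zero_le m) (hX i x)
  unfold StackMM.charOp
  rw [hmul, h I _ hbound]
  exact hdiv

namespace IsStackOp

variable (hm : 0 < m) (hψ : IsStackOp m ψ)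
include hm hψ

lemma apply_mul_eq {X : E → ℕ} (hX : IsBinary X) (x : E) :
    ψ (fun y => m * X y) x = m * charOp m ψ X x := by
  rcases hψ.2.1 X hX x with h | h <;> simp [charOp, h, Nat.div_self hm]

lemma charOp_le_one {X : E → ℕ} (hX : IsBinary X) (x : E) : charOp m ψ X x ≤ 1 := by
  rcases hψ.2.1 X hX x with h | h <;> simp [charOp, h, Nat.div_self hm]

lemma eq_sum_charOp_thresh {f : E → ℕ} (hf : IsGrey m f) (x : E) :
    ψ f x = ∑ t ∈ Finset.Icc 1 m, charOp m ψ (thresh t f) x := by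
  have h := hψ.2.2 f hf x
  rw [Finset.sum_congr rfl fun t _ => hψ.apply_mul_eq hm (isBinary_thresh t f) x,
    ← Finset.mul_sum] at h
  exact Nat.eq_of_mul_eq_mul_left hm h

lemma charOp_thresh
    (hmono : ∀ X Y : E → ℕ, IsBinary Y → X ≤ Y → charOp m ψ X ≤ charOp m ψ Y)
    {f : E → ℕ} (hf : IsGrey m f) {t : ℕ} (ht : t ∈ Finset.Icc 1 m) :
    charOp m ψ (thresh t f) = thresh t (ψ f) := by
  funext x
  rw [eq_ite_le_sum_of_antitone (a := fun t => charOp m ψ (thresh t f) x)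
    (fun s t hst => hmono _ _ (isBinary_thresh s f) (thresh_anti hst f) x)
    (fun t => hψ.charOp_le_one hm (isBinary_thresh t f) x) ht,
    ← hψ.eq_sum_charOp_thresh hm hf x]
  rfl

lemma erosionOn_of_charOp (h : ErosionOn 1 (charOp m ψ)) : ErosionOn m ψ := by
  intro I F hF
  have hmono : ∀ X Y : E → ℕ, IsBinary Y → X ≤ Y → charOp m ψ X ≤ charOp m ψ Y :=
    fun _ _ hY hXY => h.le_of_le hY hXY
  funext x
  calc ψ (famInf m F) x
      = ∑ t ∈ Finset.Icc 1 m, charOp m ψ (thresh t (famInf m F)) x :=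
        hψ.eq_sum_charOp_thresh hm (famInf_le_top m F) x
    _ = ∑ t ∈ Finset.Icc 1 m, thresh t (famInf m fun i => ψ (F i)) x := by
        refine Finset.sum_congr rfl fun t ht => ?_
        have htm := (Finset.mem_Icc.1 ht).2
        rw [thresh_famInf htm, h I _ fun i => isBinary_thresh t (F i), thresh_famInf htm]
        simp only [hψ.charOp_thresh hm hmono (hF _) ht]
    _ = famInf m (fun i => ψ (F i)) x := sum_thresh (famInf_le_top m _) x

end IsStackOp

end StackOperator

theorem stack_erosion_iff_general {E : Type*}
    (m : ℕ) (hm : 0 < m)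
    (ψ : (E → ℕ) → E → ℕ) (hstack : IsStackOp m ψ) :
    ErosionOn m ψ ↔ ErosionOn 1 (charOp m ψ) :=
  ⟨fun h => h.charOp hm, hstack.erosionOn_of_charOp hm⟩

/-- Theorem 1 (5): a stack W-operator is an erosion iff its characteristic set operator is. -/
theorem stack_erosion_iff {E : Type*} [AddCommGroup E] [Countable E]
    (m : ℕ) (hm : 0 < m) (W : E → ℕ) (hW : IsBinary W)
    (ψ : (E → ℕ) → E → ℕ) (hstack : IsStackOp m ψ) (hWop : IsWOp m W ψ) :
    ErosionOn m ψ ↔ ErosionOn 1 (charOp m ψ) :=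
  stack_erosion_iff_general m hm ψ hstack

end StackMM
end

section
/- Let ψ be a stack W-operator and let ψ̃ = F⁻¹(ψ) be its characteristic set operator. Then ψ is a dilation (i.e., for every index type I and every family (f_i)_{i∈I} of grey-scale images, ψ(⨆_{i∈I} f_i) = ⨆_{i∈I} ψ(f_i), where suprema are taken pointwise in the complete lattice of grey-scale images) if, and only if, ψ̃ is a dilation on binary images (i.e., ψ̃(⨆_{i∈I} X_i) = ⨆_{i∈I} ψ̃(X_i) for every family of binary images). -/
namespace StackMM

variable {E : Type*}

variable [AddCommGroup E]

lemma bddAux {I : Type} (c : ℕ) (g : I → ℕ) (h : ∀ i, g i ≤ c) :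
    BddAbove (insert 0 (Set.range g)) := by
  refine ⟨c, ?_⟩; rintro a (rfl | ⟨i, rfl⟩); exacts [Nat.zero_le c, h i]

lemma sSupAux_le {I : Type} (c : ℕ) (g : I → ℕ) (h : ∀ i, g i ≤ c) :
    sSup (insert 0 (Set.range g)) ≤ c := by
  refine csSup_le ⟨0, Set.mem_insert _ _⟩ ?_
  rintro a (rfl | ⟨i, rfl⟩); exacts [Nat.zero_le c, h i]

lemma sSupAux_mem {I : Type} (c : ℕ) (g : I → ℕ) (h : ∀ i, g i ≤ c) :
    sSup (insert 0 (Set.range g)) ∈ insert 0 (Set.range g) :=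
  Nat.sSup_mem ⟨0, Set.mem_insert _ _⟩ (bddAux c g h)

lemma le_sSupAux {I : Type} (c : ℕ) (g : I → ℕ) (h : ∀ i, g i ≤ c) (i : I) :
    g i ≤ sSup (insert 0 (Set.range g)) :=
  le_csSup (bddAux c g h) (Set.mem_insert_of_mem _ ⟨i, rfl⟩)

lemma sSupAux_mul {I : Type} (c m : ℕ) (g : I → ℕ) (h : ∀ i, g i ≤ c) :
    sSup (insert 0 (Set.range fun i => m * g i)) = m * sSup (insert 0 (Set.range g)) := by
  apply le_antisymm
  · refine csSup_le ⟨0, Set.mem_insert _ _⟩ ?_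
    rintro a (rfl | ⟨i, rfl⟩)
    · exact Nat.zero_le _
    · exact Nat.mul_le_mul_left m (le_sSupAux c g h i)
  · rcases sSupAux_mem c g h with hmem | ⟨i, hi⟩
    · simp [hmem]
    · rw [← hi]
      exact le_csSup (bddAux (m * c) _ (fun i => Nat.mul_le_mul_left m (h i)))
        (Set.mem_insert_of_mem _ ⟨i, rfl⟩)

/-- Key combinatorial lemma: for decreasing 0/1 indicators, sum of sups = sup of sums. -/
lemma sum_sSup_eq {I : Type} (m : ℕ) (d : ℕ → I → ℕ)
    (hd1 : ∀ t i, d t i ≤ 1)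
    (hmono : ∀ t t' i, t ≤ t' → d t' i ≤ d t i) :
    ∑ t ∈ Finset.Icc 1 m, sSup (insert 0 (Set.range fun i => d t i)) =
    sSup (insert 0 (Set.range fun i => ∑ t ∈ Finset.Icc 1 m, d t i)) := by
  set N : I → ℕ := fun i => ∑ t ∈ Finset.Icc 1 m, d t i with hN
  have hNle : ∀ i, N i ≤ m := by
    intro i
    calc N i ≤ ∑ t ∈ Finset.Icc 1 m, 1 := Finset.sum_le_sum fun t _ => hd1 t i
    _ = m := by simp
  -- d t i = 1 ↔ t ≤ N i, for t ∈ Icc 1 m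
  have key : ∀ t i, 1 ≤ t → t ≤ m → (d t i = 1 ↔ t ≤ N i) := by
    intro t i ht htm
    constructor
    · intro h1
      have : ∀ s ∈ Finset.Icc 1 t, d s i = 1 := by
        intro s hs
        rw [Finset.mem_Icc] at hs
        have h2 := hmono s t i hs.2
        have h3 := hd1 s i
        omega
      calc t = ∑ s ∈ Finset.Icc 1 t, 1 := by simp
      _ = ∑ s ∈ Finset.Icc 1 t, d s i := (Finset.sum_congr rfl fun s hs => (this s hs).symm)
      _ ≤ N i := Finset.sum_le_sum_of_subset (Finset.Icc_subset_Icc_right htm)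
    · intro hle
      by_contra h0
      have h0 : d t i = 0 := by have := hd1 t i; omega
      have hz : ∀ s ∈ Finset.Icc 1 m, t ≤ s → d s i = 0 := by
        intro s _ hts
        have := hmono t s i hts; omega
      have : N i ≤ ∑ s ∈ Finset.Icc 1 m, (if s < t then 1 else 0) := by
        refine Finset.sum_le_sum ?_
        intro s hs
        by_cases hst : s < t
        · simp [hst, hd1 s i]
        · simp [hst, hz s hs (le_of_not_gt hst)]
      have h2 : ∑ s ∈ Finset.Icc 1 m, (if s < t then 1 else 0) = (t-1) := by
        rw [Finset.sum_boole]
        have : (Finset.Icc 1 m).filter (· < t) = Finset.Icc 1 (t-1) := by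
          ext s
          simp only [Finset.mem_filter, Finset.mem_Icc]
          omega
        rw [this]
        simp [Nat.card_Icc]
      omega
  set S := sSup (insert 0 (Set.range N)) with hS
  have hSm : S ≤ m := sSupAux_le m N hNle
  have step : ∀ t, 1 ≤ t → t ≤ m →
      sSup (insert 0 (Set.range fun i => d t i)) = if t ≤ S then 1 else 0 := by
    intro t ht htm
    by_cases hts : t ≤ S
    · simp only [hts, if_true]
      rcases sSupAux_mem m N hNle with hmem | ⟨i, hi⟩
      · rw [← hS] at hmem; omega
      · rw [← hS] at hi
        apply le_antisymm (sSupAux_le 1 _ (hd1 t))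
        have : d t i = 1 := (key t i ht htm).2 (by omega)
        calc 1 = d t i := this.symm
        _ ≤ _ := le_sSupAux 1 _ (hd1 t) i
    · simp only [hts, if_false]
      apply Nat.le_zero.mp
      refine sSupAux_le 0 _ ?_
      intro i
      have hNi : N i ≤ S := le_sSupAux m N hNle i
      by_contra h
      have : d t i = 1 := by have := hd1 t i; omega
      have := (key t i ht htm).1 this
      omega
  calc ∑ t ∈ Finset.Icc 1 m, sSup (insert 0 (Set.range fun i => d t i))
      = ∑ t ∈ Finset.Icc 1 m, (if t ≤ S then 1 else 0) := by
        refine Finset.sum_congr rfl fun t ht => ?_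
        rw [Finset.mem_Icc] at ht
        exact step t ht.1 ht.2
    _ = S := by
        rw [Finset.sum_boole]
        have : (Finset.Icc 1 m).filter (· ≤ S) = Finset.Icc 1 S := by
          ext s
          simp only [Finset.mem_filter, Finset.mem_Icc]
          omega
        rw [this]; simp [Nat.card_Icc]


lemma hchar_le {E : Type*} (m : ℕ) (hm : 0 < m) (ψ : (E → ℕ) → E → ℕ)
    (hstack : IsStackOp m ψ) (X : E → ℕ) (hX : IsBinary X) (x : E) :
    charOp m ψ X x ≤ 1 := by
  rcases hstack.2.1 X hX x with h | h <;> simp [charOp, h, Nat.div_self hm]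

lemma char_eq {E : Type*} (m : ℕ) (hm : 0 < m) (ψ : (E → ℕ) → E → ℕ)
    (hstack : IsStackOp m ψ) (X : E → ℕ) (hX : IsBinary X) (x : E) :
    ψ (fun y => m * X y) x = m * charOp m ψ X x := by
  rcases hstack.2.1 X hX x with h | h <;> simp [charOp, h, Nat.div_self hm]

lemma thresh_binary {E : Type*} (t : ℕ) (f : E → ℕ) : IsBinary (thresh t f) := by
  intro x; unfold thresh; split <;> simp

lemma psi_sum {E : Type*} (m : ℕ) (hm : 0 < m) (ψ : (E → ℕ) → E → ℕ)
    (hstack : IsStackOp m ψ) (f : E → ℕ) (hf : IsGrey m f) (x : E) :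
    ψ f x = ∑ t ∈ Finset.Icc 1 m, charOp m ψ (thresh t f) x := by
  have h := hstack.2.2 f hf x
  have h2 : ∀ t ∈ Finset.Icc 1 m, ψ (fun y => m * thresh t f y) x
      = m * charOp m ψ (thresh t f) x :=
    fun t _ => char_eq m hm ψ hstack _ (thresh_binary t f) x
  rw [Finset.sum_congr rfl h2, ← Finset.mul_sum] at h
  exact Nat.eq_of_mul_eq_mul_left hm h

/-- Theorem 1 (6): a stack W-operator is a dilation iff its characteristic set operator is. -/
theorem stack_dilation_iff {E : Type*} [AddCommGroup E] [Countable E]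
    (m : ℕ) (hm : 0 < m) (W : E → ℕ) (hW : IsBinary W)
    (ψ : (E → ℕ) → E → ℕ) (hstack : IsStackOp m ψ) (hWop : IsWOp m W ψ) :
    DilationOn m ψ ↔ DilationOn 1 (charOp m ψ) := by
  constructor
  · -- ψ dilation ⇒ charOp dilation
    intro hdil I F hF
    funext x
    have hGF : (fun y => m * famSup F y) = famSup (fun i y => m * F i y) := by
      funext y
      exact (sSupAux_mul 1 m (fun i => F i y) (fun i => hF i y)).symm
    have hdG := hdil I (fun i y => m * F i y)
      (fun i y => by calc m * F i y ≤ m * 1 := Nat.mul_le_mul_left m (hF i y)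
                     _ = m := by ring)
    have hψ : ∀ i, ψ (fun y => m * F i y) x = m * charOp m ψ (F i) x :=
      fun i => char_eq m hm ψ hstack (F i) (hF i) x
    show ψ (fun y => m * famSup F y) x / m = _
    rw [hGF, hdG]
    show sSup (insert 0 (Set.range fun i => ψ (fun y => m * F i y) x)) / m = _
    have : (fun i => ψ (fun y => m * F i y) x) = fun i => m * charOp m ψ (F i) x := by
      funext i; exact hψ i
    rw [this, sSupAux_mul 1 m _ (fun i => hchar_le m hm ψ hstack (F i) (hF i) x),
      Nat.mul_div_cancel_left _ hm]
    rfl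
  · -- charOp dilation ⇒ ψ dilation
    intro hdil I F hF
    -- charOp is monotone on binary images
    have hmonoC : ∀ X Y : E → ℕ, IsBinary X → IsBinary Y → (∀ y, X y ≤ Y y) →
        ∀ x, charOp m ψ X x ≤ charOp m ψ Y x := by
      intro X Y hX hY hXY x
      set G : Bool → E → ℕ := fun b => if b then Y else X with hG
      have hGbin : ∀ b, IsBinary (G b) := by
        intro b; cases b <;> simp [hG] <;> first | exact hY | exact hX
      have hGb : ∀ b y, G b y ≤ 1 := fun b y => hGbin b y
      have hfam : famSup G = Y := by
        funext y
        apply le_antisymm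
        · refine csSup_le ⟨0, Set.mem_insert _ _⟩ ?_
          rintro a (rfl | ⟨b, rfl⟩)
          · exact Nat.zero_le _
          · cases b <;> simp [hG, hXY y]
        · exact le_sSupAux 1 (fun b => G b y) (fun b => hGb b y) true
      have hb := hdil Bool G hGb
      rw [hfam] at hb
      rw [hb]
      exact le_sSupAux 1 (fun b => charOp m ψ (G b) x)
        (fun b => hchar_le m hm ψ hstack _ (hGbin b) x) false
    funext x
    have hgrey : IsGrey m (famSup F) := fun y => sSupAux_le m _ (fun i => hF i y)
    -- thresholds commute with famSup
    have hthresh : ∀ t, 1 ≤ t →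
        thresh t (famSup F) = famSup (fun i => thresh t (F i)) := by
      intro t ht
      funext y
      show (if t ≤ famSup F y then 1 else 0) = sSup (insert 0 (Set.range fun i => thresh t (F i) y))
      by_cases h : t ≤ famSup F y
      · simp only [h, if_true]
        rcases sSupAux_mem m (fun i => F i y) (fun i => hF i y) with h0 | ⟨i, hi⟩
        · exfalso
          have : famSup F y = 0 := h0
          omega
        · have hty : t ≤ F i y := by
            have : famSup F y = F i y := hi.symm
            omega
          apply le_antisymm
          · calc (1:ℕ) = thresh t (F i) y := by simp [thresh, hty]
            _ ≤ _ := le_sSupAux 1 (fun i => thresh t (F i) y) (fun i => thresh_binary t (F i) y) i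
          · exact sSupAux_le 1 _ (fun i => thresh_binary t (F i) y)
      · simp only [h, if_false]
        symm
        apply Nat.le_zero.mp
        refine sSupAux_le 0 _ ?_
        intro i
        have hle : F i y ≤ famSup F y := le_sSupAux m (fun i => F i y) (fun i => hF i y) i
        have : ¬ t ≤ F i y := by omega
        simp [thresh, this]
    set d : ℕ → I → ℕ := fun t i => charOp m ψ (thresh t (F i)) x with hd
    have hd1 : ∀ t i, d t i ≤ 1 :=
      fun t i => hchar_le m hm ψ hstack _ (thresh_binary t (F i)) x
    have hdm : ∀ t t' i, t ≤ t' → d t' i ≤ d t i := by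
      intro t t' i htt
      refine hmonoC _ _ (thresh_binary _ _) (thresh_binary _ _) ?_ x
      intro y
      unfold thresh
      by_cases h : t' ≤ F i y
      · simp [h, le_trans htt h]
      · simp [h]
    calc ψ (famSup F) x
        = ∑ t ∈ Finset.Icc 1 m, charOp m ψ (thresh t (famSup F)) x :=
          psi_sum m hm ψ hstack _ hgrey x
      _ = ∑ t ∈ Finset.Icc 1 m, sSup (insert 0 (Set.range fun i => d t i)) := by
          refine Finset.sum_congr rfl fun t ht => ?_
          rw [Finset.mem_Icc] at ht
          rw [hthresh t ht.1, hdil I (fun i => thresh t (F i))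
            (fun i y => thresh_binary t (F i) y)]
          rfl
      _ = sSup (insert 0 (Set.range fun i => ∑ t ∈ Finset.Icc 1 m, d t i)) :=
          sum_sSup_eq m d hd1 hdm
      _ = famSup (fun i => ψ (F i)) x := by
          show _ = sSup (insert 0 (Set.range fun i => ψ (F i) x))
          congr 1
          ext a
          constructor <;> rintro (rfl | ⟨i, rfl⟩)
          · exact Or.inl rfl
          · exact Or.inr ⟨i, psi_sum m hm ψ hstack (F i) (hF i) x⟩
          · exact Or.inl rfl
          · exact Or.inr ⟨i, (psi_sum m hm ψ hstack (F i) (hF i) x).symm⟩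

end StackMM
end

section
/- Let ψ be a stack W-operator and let ψ̃ = F⁻¹(ψ) be its characteristic set operator. Then ψ is an anti-dilation (i.e., for every index type I and every family (f_i)_{i∈I} of grey-scale images, ψ(⨆_{i∈I} f_i) = ⨅_{i∈I} ψ(f_i), with pointwise suprema and infima in the complete lattice of grey-scale images) if, and only if, ψ̃ is an anti-dilation on binary images (i.e., ψ̃(⨆_{i∈I} X_i) = ⨅_{i∈I} ψ̃(X_i) for every family of binary images). -/
namespace StackMM

variable {E : Type*}

variable [AddCommGroup E]

/-! ### Auxiliary lemmas -/

section Aux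

lemma aux_sInf_insert_eq_of_forall {c : ℕ} {S : Set ℕ} (h : ∀ b ∈ S, b = c) :
    sInf (insert c S) = c := by
  refine le_antisymm (Nat.sInf_le (Set.mem_insert _ _)) ?_
  refine le_csInf ⟨c, Set.mem_insert _ _⟩ ?_
  rintro b (rfl | hb)
  · exact le_rfl
  · exact (h b hb).ge

lemma aux_sInf_insert_eq_zero {c : ℕ} {S : Set ℕ} (h : 0 ∈ S) :
    sInf (insert c S) = 0 :=
  Nat.le_zero.1 (Nat.sInf_le (Set.mem_insert_of_mem _ h))

open Classical in
lemma aux_scaledBinSup {I : Type} (c : ℕ) (g : I → ℕ) (hg : ∀ i, g i ≤ 1) :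
    sSup (insert 0 (Set.range fun i => c * g i)) = if ∃ i, g i = 1 then c else 0 := by
  split_ifs with h
  · obtain ⟨i, hi⟩ := h
    refine le_antisymm ?_ ?_
    · refine csSup_le ⟨0, Set.mem_insert _ _⟩ ?_
      rintro b (rfl | ⟨j, rfl⟩)
      · exact Nat.zero_le _
      · calc c * g j ≤ c * 1 := Nat.mul_le_mul_left _ (hg j)
          _ = c := by ring
    · refine le_csSup ⟨c, ?_⟩ ?_
      · rintro b (rfl | ⟨j, rfl⟩)
        · exact Nat.zero_le _
        · calc c * g j ≤ c * 1 := Nat.mul_le_mul_left _ (hg j)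
            _ = c := by ring
      · exact Set.mem_insert_of_mem _ ⟨i, by show c * g i = c; rw [hi, mul_one]⟩
  · push_neg at h
    refine le_antisymm ?_ (Nat.zero_le _)
    refine csSup_le ⟨0, Set.mem_insert _ _⟩ ?_
    rintro b (rfl | ⟨j, rfl⟩)
    · exact le_rfl
    · have : g j = 0 := by have := hg j; have := h j; omega
      simp [this]

open Classical in
lemma aux_binSup {I : Type} (g : I → ℕ) (hg : ∀ i, g i ≤ 1) :
    sSup (insert 0 (Set.range g)) = if ∃ i, g i = 1 then 1 else 0 := by
  have := aux_scaledBinSup 1 g hg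
  simpa using this

open Classical in
lemma aux_scaledBinInf {I : Type} (c : ℕ) (g : I → ℕ) (hg : ∀ i, g i = 0 ∨ g i = c) :
    sInf (insert c (Set.range g)) = if ∃ i, g i = 0 then 0 else c := by
  split_ifs with h
  · obtain ⟨i, hi⟩ := h
    exact aux_sInf_insert_eq_zero ⟨i, hi⟩
  · push_neg at h
    refine aux_sInf_insert_eq_of_forall ?_
    rintro b ⟨i, rfl⟩
    rcases hg i with h0 | h1
    · exact absurd h0 (h i)
    · exact h1

/-- The key combinatorial lemma: for a family of `{0,1}`-valued functions increasing in `t`,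
the sum over `t ∈ [1,m]` of pointwise infima equals the infimum of the sums. -/
lemma aux_sum_inf {I : Type} (m : ℕ) (a : ℕ → I → ℕ)
    (h01 : ∀ t i, a t i ≤ 1)
    (hmono : ∀ t t' i, t ≤ t' → a t i ≤ a t' i) :
    ∑ t ∈ Finset.Icc 1 m, sInf (insert 1 (Set.range fun i => a t i)) =
      sInf (insert m (Set.range fun i => ∑ t ∈ Finset.Icc 1 m, a t i)) := by
  obtain ⟨s, hs⟩ : ∃ s : I → ℕ, s = fun i => ∑ t ∈ Finset.Icc 1 m, a t i := ⟨_, rfl⟩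
  obtain ⟨r, hr⟩ : ∃ r : ℕ, r = sInf (insert m (Set.range s)) := ⟨_, rfl⟩
  have hgoal : (Set.range fun i => ∑ t ∈ Finset.Icc 1 m, a t i) = Set.range s := by rw [hs]
  rw [hgoal, ← hr]
  have hsi : ∀ i, s i = ∑ t ∈ Finset.Icc 1 m, a t i := by rw [hs]; intro i; rfl
  have hrm : r ≤ m := by rw [hr]; exact Nat.sInf_le (Set.mem_insert _ _)
  have hrs : ∀ i, r ≤ s i := by
    rw [hr]; exact fun i => Nat.sInf_le (Set.mem_insert_of_mem _ ⟨i, rfl⟩)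
  have char1 : ∀ t, 1 ≤ t → t ≤ m → ∀ i, a t i = 1 → m - t < s i := by
    intro t h1 h2 i hai
    rw [hsi]
    have hsub : ∑ u ∈ Finset.Icc t m, a u i ≤ ∑ t ∈ Finset.Icc 1 m, a t i :=
      Finset.sum_le_sum_of_subset (Finset.Icc_subset_Icc_left h1)
    have heach : ∀ u ∈ Finset.Icc t m, a u i = 1 := by
      intro u hu
      rw [Finset.mem_Icc] at hu
      have := hmono t u i hu.1
      have := h01 u i
      omega
    rw [Finset.sum_congr rfl heach, Finset.sum_const, smul_eq_mul, mul_one,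
      Nat.card_Icc] at hsub
    omega
  have char2 : ∀ t, 1 ≤ t → t ≤ m → ∀ i, a t i = 0 → s i ≤ m - t := by
    intro t h1 h2 i hai
    rw [hsi]
    have hle : (∑ t ∈ Finset.Icc 1 m, a t i) ≤ ∑ u ∈ Finset.Icc 1 m, (if t < u then 1 else 0) := by
      refine Finset.sum_le_sum ?_
      intro u hu
      split_ifs with h
      · exact h01 u i
      · have := hmono u t i (by omega)
        omega
    have hfil : (Finset.Icc 1 m).filter (fun u => t < u) = Finset.Icc (t + 1) m := by
      ext u
      simp only [Finset.mem_filter, Finset.mem_Icc]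
      omega
    rw [← Finset.sum_filter, hfil, Finset.sum_const, smul_eq_mul, mul_one,
      Nat.card_Icc] at hle
    omega
  have key : ∀ t ∈ Finset.Icc 1 m,
      sInf (insert 1 (Set.range fun i => a t i)) = if m - r < t then 1 else 0 := by
    intro t ht
    rw [Finset.mem_Icc] at ht
    split_ifs with h
    · refine aux_sInf_insert_eq_of_forall ?_
      rintro b ⟨i, rfl⟩
      show a t i = 1
      by_contra hb
      have hb0 : a t i = 0 := by have := h01 t i; omega
      have := char2 t ht.1 ht.2 i hb0
      have := hrs i
      omega
    · have hattain : sInf (insert m (Set.range s)) ∈ insert m (Set.range s) :=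
        Nat.sInf_mem ⟨m, Set.mem_insert _ _⟩
      rw [← hr, Set.mem_insert_iff] at hattain
      rcases hattain with hre | ⟨i, hi⟩
      · omega
      · have h0 : a t i = 0 := by
          by_contra hb
          have h1' : a t i = 1 := by have := h01 t i; omega
          have := char1 t ht.1 ht.2 i h1'
          omega
        exact aux_sInf_insert_eq_zero ⟨i, h0⟩
  rw [Finset.sum_congr rfl key]
  have hfil : (Finset.Icc 1 m).filter (fun t => m - r < t) = Finset.Icc (m - r + 1) m := by
    ext t
    simp only [Finset.mem_filter, Finset.mem_Icc]
    omega
  rw [← Finset.sum_filter, hfil, Finset.sum_const, smul_eq_mul, mul_one, Nat.card_Icc]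
  omega

end Aux

/-- Theorem 1 (7): a stack W-operator is an anti-dilation iff its characteristic set operator is. -/
theorem stack_antiDilation_iff {E : Type*} [AddCommGroup E] [Countable E]
    (m : ℕ) (hm : 0 < m) (W : E → ℕ) (hW : IsBinary W)
    (ψ : (E → ℕ) → E → ℕ) (hstack : IsStackOp m ψ) (hWop : IsWOp m W ψ) :
    AntiDilationOn m ψ ↔ AntiDilationOn 1 (charOp m ψ) := by
  obtain ⟨hgrey, hbin, hdecomp⟩ := hstack
  have hthresh_bin : ∀ (t : ℕ) (g : E → ℕ), IsBinary (thresh t g) := by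
    intro t g y
    simp only [thresh]
    split <;> omega
  have hchar01 : ∀ X : E → ℕ, IsBinary X → ∀ x,
      charOp m ψ X x = 0 ∨ charOp m ψ X x = 1 := by
    intro X hX x
    rcases hbin X hX x with h | h <;> simp [charOp, h, Nat.div_self hm]
  have hmul_char : ∀ X : E → ℕ, IsBinary X → ∀ x,
      m * charOp m ψ X x = ψ (fun y => m * X y) x := by
    intro X hX x
    rcases hbin X hX x with h | h <;> simp [charOp, h, Nat.div_self hm]
  constructor
  · -- ψ anti-dilation ⇒ charOp anti-dilation
    intro h I X hX
    funext x
    have hrw : (fun y => m * famSup X y) = famSup fun i y => m * X i y := by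
      funext y
      show m * sSup _ = sSup _
      rw [aux_scaledBinSup m (fun i => X i y) (fun i => hX i y),
        aux_binSup (fun i => X i y) (fun i => hX i y)]
      split_ifs <;> simp
    have happ := h I (fun i y => m * X i y)
      (fun i y => by
        calc m * X i y ≤ m * 1 := Nat.mul_le_mul_left _ (hX i y)
          _ = m := by ring)
    show ψ (fun y => m * famSup X y) x / m = _
    rw [hrw, happ]
    show sInf (insert m (Set.range fun i => ψ (fun y => m * X i y) x)) / m
       = sInf (insert 1 (Set.range fun i => charOp m ψ (X i) x))
    rw [aux_scaledBinInf m _ (fun i => hbin (X i) (hX i) x),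
      aux_scaledBinInf 1 (fun i => charOp m ψ (X i) x) (fun i => hchar01 (X i) (hX i) x)]
    have hiff : (∃ i, ψ (fun y => m * X i y) x = 0) ↔ (∃ i, charOp m ψ (X i) x = 0) := by
      constructor
      · rintro ⟨i, hi⟩
        exact ⟨i, by simp [charOp, hi]⟩
      · rintro ⟨i, hi⟩
        refine ⟨i, ?_⟩
        rcases hbin (X i) (hX i) x with h' | h'
        · exact h'
        · exfalso
          simp only [charOp, h', Nat.div_self hm] at hi
          omega
    by_cases hp : ∃ i, ψ (fun y => m * X i y) x = 0
    · rw [if_pos hp, if_pos (hiff.mp hp)]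
      simp
    · rw [if_neg hp, if_neg (fun hq => hp (hiff.mpr hq))]
      exact Nat.div_self hm
  · -- charOp anti-dilation ⇒ ψ anti-dilation
    intro h I f hf
    have hdec : ∀ g : E → ℕ, IsGrey m g → ∀ x,
        ψ g x = ∑ t ∈ Finset.Icc 1 m, charOp m ψ (thresh t g) x := by
      intro g hg x
      refine Nat.eq_of_mul_eq_mul_left hm ?_
      rw [hdecomp g hg x, Finset.mul_sum]
      exact Finset.sum_congr rfl fun t _ => (hmul_char (thresh t g) (hthresh_bin t g) x).symm
    have hanti : ∀ X Y : E → ℕ, IsBinary X → IsBinary Y → (∀ y, X y ≤ Y y) →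
        ∀ x, charOp m ψ Y x ≤ charOp m ψ X x := by
      intro X Y hX hY hXY x
      have hfam : famSup (fun b : Bool => if b then Y else X) = Y := by
        funext y
        show sSup _ = Y y
        refine le_antisymm ?_ ?_
        · refine csSup_le ⟨0, Set.mem_insert _ _⟩ ?_
          rintro b (rfl | ⟨j, rfl⟩)
          · exact Nat.zero_le _
          · cases j <;> simp [hXY y]
        · refine le_csSup ⟨Y y, ?_⟩ (Set.mem_insert_of_mem _ ⟨true, rfl⟩)
          rintro b (rfl | ⟨j, rfl⟩)
          · exact Nat.zero_le _
          · cases j <;> simp [hXY y]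
      have happ := h Bool (fun b : Bool => if b then Y else X)
        (fun b y => by cases b <;> simp [hX y, hY y])
      rw [hfam] at happ
      have hYx : charOp m ψ Y x
          = sInf (insert 1 (Set.range fun b : Bool => charOp m ψ (if b then Y else X) x)) := by
        rw [happ]; rfl
      rw [hYx]
      exact Nat.sInf_le (Set.mem_insert_of_mem _ ⟨false, by simp⟩)
    funext x
    have hbdd : ∀ y, BddAbove (insert 0 (Set.range fun i => f i y)) := by
      intro y
      refine ⟨m, ?_⟩
      rintro b (rfl | ⟨i, rfl⟩)
      · exact Nat.zero_le _
      · exact hf i y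
    have hgrey_sup : IsGrey m (famSup f) := by
      intro y
      refine csSup_le ⟨0, Set.mem_insert _ _⟩ ?_
      rintro b (rfl | ⟨i, rfl⟩)
      · exact Nat.zero_le _
      · exact hf i y
    have hthresh : ∀ t, 1 ≤ t → thresh t (famSup f) = famSup fun i => thresh t (f i) := by
      intro t ht
      funext y
      show (if t ≤ famSup f y then 1 else 0) = sSup _
      rw [aux_binSup (fun i => thresh t (f i) y) (fun i => hthresh_bin t (f i) y)]
      by_cases hc : t ≤ famSup f y
      · rw [if_pos hc]
        have hmem : famSup f y ∈ insert 0 (Set.range fun i => f i y) :=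
          Nat.sSup_mem ⟨0, Set.mem_insert _ _⟩ (hbdd y)
        rw [Set.mem_insert_iff] at hmem
        rcases hmem with h0 | ⟨i, hi⟩
        · omega
        · have hthr : (fun i => thresh t (f i) y) i = 1 := by
            show (if t ≤ f i y then 1 else 0) = 1
            have hi' : f i y = famSup f y := hi
            rw [if_pos (by omega)]
          rw [if_pos ⟨i, hthr⟩]
      · rw [if_neg hc, if_neg]
        rintro ⟨i, hi⟩
        have hfy : f i y ≤ famSup f y :=
          le_csSup (hbdd y) (Set.mem_insert_of_mem _ ⟨i, rfl⟩)
        have : (if t ≤ f i y then 1 else 0) = 1 := hi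
        split at this <;> omega
    show ψ (famSup f) x = sInf (insert m (Set.range fun i => ψ (f i) x))
    rw [hdec (famSup f) hgrey_sup x]
    have step : ∀ t ∈ Finset.Icc 1 m,
        charOp m ψ (thresh t (famSup f)) x
          = sInf (insert 1 (Set.range fun i => charOp m ψ (thresh t (f i)) x)) := by
      intro t ht
      rw [Finset.mem_Icc] at ht
      rw [hthresh t ht.1, h I (fun i => thresh t (f i)) (fun i y => hthresh_bin t (f i) y)]
      rfl
    rw [Finset.sum_congr rfl step,
      aux_sum_inf m (fun t i => charOp m ψ (thresh t (f i)) x)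
        (fun t i => by
          show charOp m ψ (thresh t (f i)) x ≤ 1
          rcases hchar01 (thresh t (f i)) (hthresh_bin t (f i)) x with h' | h' <;> omega)
        (fun t t' i htt => by
          show charOp m ψ (thresh t (f i)) x ≤ charOp m ψ (thresh t' (f i)) x
          refine hanti (thresh t' (f i)) (thresh t (f i))
            (hthresh_bin t' (f i)) (hthresh_bin t (f i)) ?_ x
          intro y
          simp only [thresh]
          split_ifs <;> omega)]
    have hsum : (fun i => ∑ t ∈ Finset.Icc 1 m, charOp m ψ (thresh t (f i)) x)
        = fun i => ψ (f i) x := by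
      funext i
      exact (hdec (f i) (hf i) x).symm
    rw [hsum]

end StackMM
end

section
/- Let ψ be a stack W-operator and let ψ̃ = F⁻¹(ψ) be its characteristic set operator. Then ψ is an anti-erosion (i.e., for every index type I and every family (f_i)_{i∈I} of grey-scale images, ψ(⨅_{i∈I} f_i) = ⨆_{i∈I} ψ(f_i), with pointwise suprema and infima in the complete lattice of grey-scale images) if, and only if, ψ̃ is an anti-erosion on binary images (i.e., ψ̃(⨅_{i∈I} X_i) = ⨆_{i∈I} ψ̃(X_i) for every family of binary images). -/
namespace StackMM

variable {E : Type*}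

variable [AddCommGroup E]

/-! ### Auxiliary lemmas -/

/-- Multiplication distributes over `sInf` of a nonempty set of naturals. -/
lemma aux_mul_sInf (m : ℕ) {S : Set ℕ} (hS : S.Nonempty) :
    sInf ((fun a => m * a) '' S) = m * sInf S := by
  apply le_antisymm
  · exact Nat.sInf_le ⟨sInf S, Nat.sInf_mem hS, rfl⟩
  · refine le_csInf (hS.image _) ?_
    rintro b ⟨a, ha, rfl⟩
    exact Nat.mul_le_mul_left m (Nat.sInf_le ha)

/-- Division of a `{0, m}`-valued supremum by `m`. -/
lemma aux_sup_div {I : Type} (m : ℕ) (hm : 0 < m) (a : I → ℕ)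
    (h : ∀ i, a i = 0 ∨ a i = m) :
    sSup (insert 0 (Set.range a)) / m = sSup (insert 0 (Set.range fun i => a i / m)) := by
  by_cases hex : ∃ i, a i = m
  · obtain ⟨i0, hi0⟩ := hex
    have h1 : sSup (insert 0 (Set.range a)) = m := by
      apply le_antisymm
      · refine csSup_le ⟨0, Set.mem_insert _ _⟩ ?_
        rintro b (rfl | ⟨i, rfl⟩)
        · exact Nat.zero_le m
        · rcases h i with h' | h' <;> omega
      · refine le_csSup ⟨m, ?_⟩ (Set.mem_insert_iff.2 (Or.inr ⟨i0, hi0⟩))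
        rintro b (rfl | ⟨i, rfl⟩)
        · exact Nat.zero_le m
        · rcases h i with h' | h' <;> omega
    have h2 : sSup (insert 0 (Set.range fun i => a i / m)) = 1 := by
      apply le_antisymm
      · refine csSup_le ⟨0, Set.mem_insert _ _⟩ ?_
        rintro b (rfl | ⟨i, rfl⟩)
        · exact Nat.zero_le 1
        · rcases h i with h' | h' <;> simp [h', Nat.div_self hm]
      · refine le_csSup ⟨1, ?_⟩ (Set.mem_insert_iff.2 (Or.inr ⟨i0, by simp [hi0, Nat.div_self hm]⟩))
        rintro b (rfl | ⟨i, rfl⟩)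
        · exact Nat.zero_le 1
        · rcases h i with h' | h' <;> simp [h', Nat.div_self hm]
    rw [h1, h2, Nat.div_self hm]
  · push_neg at hex
    have hz : ∀ i, a i = 0 := fun i => (h i).resolve_right (hex i)
    have h1 : sSup (insert 0 (Set.range a)) = 0 := by
      apply Nat.le_zero.mp
      refine csSup_le ⟨0, Set.mem_insert _ _⟩ ?_
      rintro b (rfl | ⟨i, rfl⟩) <;> simp [hz]
    have h2 : sSup (insert 0 (Set.range fun i => a i / m)) = 0 := by
      apply Nat.le_zero.mp
      refine csSup_le ⟨0, Set.mem_insert _ _⟩ ?_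
      rintro b (rfl | ⟨i, rfl⟩) <;> simp [hz]
    rw [h1, h2]
    simp

/-- The key combinatorial lemma: for a family of `{0,1}`-valued quantities monotone in `t`,
the sum over `t` of suprema equals the supremum of the sums. -/
lemma aux_sum_sup {I : Type} (m : ℕ) (c : ℕ → I → ℕ)
    (h1 : ∀ t i, c t i ≤ 1) (hmono : ∀ i, Monotone fun t => c t i) :
    ∑ t ∈ Finset.Icc 1 m, sSup (insert 0 (Set.range fun i => c t i)) =
      sSup (insert 0 (Set.range fun i => ∑ t ∈ Finset.Icc 1 m, c t i)) := by
  have hb : ∀ t, BddAbove (insert 0 (Set.range fun i => c t i)) := by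
    intro t
    refine ⟨1, ?_⟩
    rintro b (rfl | ⟨i, rfl⟩)
    · exact Nat.zero_le 1
    · exact h1 t i
  have hbS : BddAbove (insert 0 (Set.range fun i => ∑ t ∈ Finset.Icc 1 m, c t i)) := by
    refine ⟨m, ?_⟩
    rintro b (rfl | ⟨i, rfl⟩)
    · exact Nat.zero_le m
    · calc ∑ t ∈ Finset.Icc 1 m, c t i ≤ ∑ _t ∈ Finset.Icc 1 m, 1 :=
            Finset.sum_le_sum fun t _ => h1 t i
        _ = m := by simp
  apply le_antisymm
  · by_cases hex : ∃ t, ∃ i, c t i = 1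
    · set t1 := sInf {t | ∃ i, c t i = 1} with ht1
      obtain ⟨i0, hi0⟩ : ∃ i, c t1 i = 1 := Nat.sInf_mem hex
      have key : ∀ t, sSup (insert 0 (Set.range fun i => c t i)) ≤ c t i0 := by
        intro t
        by_cases htt : t1 ≤ t
        · have : c t i0 = 1 := le_antisymm (h1 t i0) (hi0 ▸ hmono i0 htt)
          rw [this]
          refine csSup_le ⟨0, Set.mem_insert _ _⟩ ?_
          rintro b (rfl | ⟨i, rfl⟩)
          · exact Nat.zero_le 1
          · exact h1 t i
        · have hnot : t ∉ {t | ∃ i, c t i = 1} := fun hmem => htt (Nat.sInf_le hmem)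
          have : ∀ i, c t i = 0 := by
            intro i
            have := h1 t i
            by_contra hne
            exact hnot ⟨i, by omega⟩
          refine csSup_le ⟨0, Set.mem_insert _ _⟩ ?_
          rintro b (rfl | ⟨i, rfl⟩)
          · exact Nat.zero_le _
          · simp [this]
      calc ∑ t ∈ Finset.Icc 1 m, sSup (insert 0 (Set.range fun i => c t i))
          ≤ ∑ t ∈ Finset.Icc 1 m, c t i0 := Finset.sum_le_sum fun t _ => key t
        _ ≤ _ := le_csSup hbS (Set.mem_insert_iff.2 (Or.inr ⟨i0, rfl⟩))
    · push_neg at hex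
      have hz : ∀ t i, c t i = 0 := by
        intro t i
        have := h1 t i
        have := hex t i
        omega
      have : ∀ t, sSup (insert 0 (Set.range fun i => c t i)) = 0 := by
        intro t
        apply Nat.le_zero.mp
        refine csSup_le ⟨0, Set.mem_insert _ _⟩ ?_
        rintro b (rfl | ⟨i, rfl⟩) <;> simp [hz]
      simp [this]
  · refine csSup_le ⟨0, Set.mem_insert _ _⟩ ?_
    rintro b (rfl | ⟨i, rfl⟩)
    · exact Nat.zero_le _
    · exact Finset.sum_le_sum fun t _ =>
        le_csSup (hb t) (Set.mem_insert_iff.2 (Or.inr ⟨i, rfl⟩))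

/-- Theorem 1 (8): a stack W-operator is an anti-erosion iff its characteristic set operator is. -/
theorem stack_antiErosion_iff {E : Type*} [AddCommGroup E] [Countable E]
    (m : ℕ) (hm : 0 < m) (W : E → ℕ) (hW : IsBinary W)
    (ψ : (E → ℕ) → E → ℕ) (hstack : IsStackOp m ψ) (hWop : IsWOp m W ψ) :
    AntiErosionOn m ψ ↔ AntiErosionOn 1 (charOp m ψ) := by
  obtain ⟨hImg, hBin, hSum⟩ := hstack
  have hchar01 : ∀ X : E → ℕ, IsBinary X → ∀ x,
      charOp m ψ X x = 0 ∨ charOp m ψ X x = 1 := by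
    intro X hX x
    rcases hBin X hX x with h | h <;> simp [charOp, h, Nat.div_self hm]
  have hmul_char : ∀ X : E → ℕ, IsBinary X → ∀ x,
      ψ (fun y => m * X y) x = m * charOp m ψ X x := by
    intro X hX x
    rcases hBin X hX x with h | h <;> simp [charOp, h, Nat.div_self hm]
  have hthresh_bin : ∀ (t : ℕ) (f : E → ℕ), IsBinary (thresh t f) := by
    intro t f x
    unfold thresh
    split <;> simp
  have hpsi_sum : ∀ f : E → ℕ, IsGrey m f → ∀ x,
      ψ f x = ∑ t ∈ Finset.Icc 1 m, charOp m ψ (thresh t f) x := by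
    intro f hf x
    have h : m * ψ f x = m * ∑ t ∈ Finset.Icc 1 m, charOp m ψ (thresh t f) x := by
      rw [hSum f hf x, Finset.mul_sum]
      exact Finset.sum_congr rfl fun t _ => hmul_char _ (hthresh_bin t f) x
    exact Nat.eq_of_mul_eq_mul_left hm h
  constructor
  · -- ψ anti-erosion → charOp anti-erosion
    intro hAE I F hF
    funext x
    have hscale : (fun y => m * famInf 1 F y) = famInf m (fun i y => m * F i y) := by
      funext y
      show m * sInf (insert 1 (Set.range fun i => F i y))
        = sInf (insert m (Set.range fun i => m * F i y))
      rw [← aux_mul_sInf m (Set.insert_nonempty _ _), Set.image_insert_eq,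
        ← Set.range_comp, mul_one]
      rfl
    have h1 := hAE I (fun i y => m * F i y) (fun i y => by
      calc m * F i y ≤ m * 1 := Nat.mul_le_mul_left m (hF i y)
        _ = m := mul_one m)
    show ψ (fun y => m * famInf 1 F y) x / m = _
    rw [hscale, h1]
    exact aux_sup_div m hm _ (fun i => hBin (F i) (hF i) x)
  · -- charOp anti-erosion → ψ anti-erosion
    intro hAE I F hF
    have hanti : ∀ X Y : E → ℕ, IsBinary X → IsBinary Y → (∀ y, X y ≤ Y y) →
        ∀ x, charOp m ψ Y x ≤ charOp m ψ X x := by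
      intro X Y hX hY hXY x
      have h := hAE Bool (fun b => if b then Y else X)
        (fun b y => by cases b <;> simp [hX y, hY y])
      have hinf : famInf 1 (fun b : Bool => if b then Y else X) = X := by
        funext y
        show sInf (insert 1 (Set.range fun b : Bool => (if b then Y else X) y)) = X y
        apply le_antisymm
        · exact Nat.sInf_le (Set.mem_insert_iff.2 (Or.inr ⟨false, by simp⟩))
        · refine le_csInf (Set.insert_nonempty _ _) ?_
          rintro b (rfl | ⟨c, rfl⟩)
          · exact hX y
          · cases c <;> simp [hXY y]
      rw [hinf] at h
      have hbdd : BddAbove (insert 0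
          (Set.range fun b : Bool => charOp m ψ (if b then Y else X) x)) := by
        refine ⟨1, ?_⟩
        rintro a (rfl | ⟨b, rfl⟩)
        · exact Nat.zero_le 1
        · rcases b with _ | _
          · rcases hchar01 X hX x with h' | h' <;> simp [h']
          · rcases hchar01 Y hY x with h' | h' <;> simp [h']
      calc charOp m ψ Y x
          = (fun b : Bool => charOp m ψ (if b then Y else X) x) true := by simp
        _ ≤ sSup (insert 0 (Set.range fun b : Bool => charOp m ψ (if b then Y else X) x)) :=
            le_csSup hbdd (Set.mem_insert_iff.2 (Or.inr ⟨true, rfl⟩))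
        _ = charOp m ψ X x := (congrFun h x).symm
    funext x
    have hgrey_inf : IsGrey m (famInf m F) := fun y => Nat.sInf_le (Set.mem_insert _ _)
    rw [hpsi_sum _ hgrey_inf x]
    have hth : ∀ t ∈ Finset.Icc 1 m,
        thresh t (famInf m F) = famInf 1 (fun i => thresh t (F i)) := by
      intro t ht
      rw [Finset.mem_Icc] at ht
      funext y
      show (if t ≤ sInf (insert m (Set.range fun i => F i y)) then 1 else 0)
        = sInf (insert 1 (Set.range fun i => thresh t (F i) y))
      by_cases hall : ∀ i, t ≤ F i y
      · have hle : t ≤ sInf (insert m (Set.range fun i => F i y)) := by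
          refine le_csInf (Set.insert_nonempty _ _) ?_
          rintro b (rfl | ⟨i, rfl⟩)
          · exact ht.2
          · exact hall i
        rw [if_pos hle]
        symm
        apply le_antisymm
        · exact Nat.sInf_le (Set.mem_insert _ _)
        · refine le_csInf (Set.insert_nonempty _ _) ?_
          rintro b (rfl | ⟨i, rfl⟩)
          · exact le_refl 1
          · simp [thresh, hall i]
      · push_neg at hall
        obtain ⟨i0, hi0⟩ := hall
        have hnle : ¬ t ≤ sInf (insert m (Set.range fun i => F i y)) := by
          intro hle
          have : sInf (insert m (Set.range fun i => F i y)) ≤ F i0 y :=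
            Nat.sInf_le (Set.mem_insert_iff.2 (Or.inr ⟨i0, rfl⟩))
          omega
        rw [if_neg hnle]
        symm
        apply Nat.le_zero.mp
        have hz : thresh t (F i0) y = 0 := by simp [thresh]; omega
        calc sInf (insert 1 (Set.range fun i => thresh t (F i) y)) ≤ thresh t (F i0) y :=
              Nat.sInf_le (Set.mem_insert_iff.2 (Or.inr ⟨i0, rfl⟩))
          _ = 0 := hz
    have hcomm : ∀ t ∈ Finset.Icc 1 m, charOp m ψ (thresh t (famInf m F)) x
        = sSup (insert 0 (Set.range fun i => charOp m ψ (thresh t (F i)) x)) := by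
      intro t ht
      rw [hth t ht, hAE I (fun i => thresh t (F i)) (fun i y => hthresh_bin t (F i) y)]
      rfl
    rw [Finset.sum_congr rfl hcomm]
    have h1 : ∀ (t : ℕ) i, charOp m ψ (thresh t (F i)) x ≤ 1 := by
      intro t i
      rcases hchar01 _ (hthresh_bin t (F i)) x with h' | h' <;> simp [h']
    have hmono : ∀ i, Monotone fun t => charOp m ψ (thresh t (F i)) x := by
      intro i t t' htt
      refine hanti (thresh t' (F i)) (thresh t (F i)) (hthresh_bin _ _) (hthresh_bin _ _)
        (fun y => ?_) x
      unfold thresh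
      by_cases h' : t' ≤ F i y
      · rw [if_pos h', if_pos (le_trans htt h')]
      · simp [h']
    rw [aux_sum_sup m (fun t i => charOp m ψ (thresh t (F i)) x) h1 hmono]
    show _ = sSup (insert 0 (Set.range fun i => ψ (F i) x))
    have heq : (fun i => ∑ t ∈ Finset.Icc 1 m, charOp m ψ (thresh t (F i)) x)
        = fun i => ψ (F i) x := funext fun i => (hpsi_sum (F i) (hF i) x).symm
    rw [heq]

end StackMM
end

section
/- The bijection F between set operators and stack operators, given by F(ψ̃)(f) = Σ_{t=1}^{m} ψ̃(T_t[f]), is an order isomorphism: for all set operators ψ̃₁, ψ̃₂, one has ψ̃₁ ≤ ψ̃₂ (i.e., ψ̃₁(X)(x) ≤ ψ̃₂(X)(x) for all binary images X and all x) if, and only if, F(ψ̃₁) ≤ F(ψ̃₂) (i.e., F(ψ̃₁)(f)(x) ≤ F(ψ̃₂)(f)(x) for all grey-scale images f and all x). -/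
namespace StackMM

variable {E : Type*}

variable [AddCommGroup E]

/-- The bijection `F` between set operators and stack operators is an order isomorphism. -/
theorem stackOf_orderIso {E : Type*} [AddCommGroup E] [Countable E]
    (m : ℕ) (hm : 0 < m) (ψt₁ ψt₂ : (E → ℕ) → E → ℕ)
    (h₁ : IsSetOp ψt₁) (h₂ : IsSetOp ψt₂) :
    (∀ X : E → ℕ, IsBinary X → ∀ x, ψt₁ X x ≤ ψt₂ X x) ↔
    (∀ f : E → ℕ, IsGrey m f → ∀ x, stackOf m ψt₁ f x ≤ stackOf m ψt₂ f x) := by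
  constructor
  · intro h f hf x
    apply Finset.sum_le_sum
    intro t ht
    exact h (thresh t f) (fun y => by unfold thresh; split <;> simp) x
  · intro h X hX x
    have hg : IsGrey m (fun y => m * X y) := fun y => by
      have := hX y; simp only []; nlinarith
    have hth : ∀ t ∈ Finset.Icc 1 m, ∀ g : (E → ℕ) → E → ℕ,
        g (thresh t (fun y => m * X y)) x = g X x := by
      intro t ht g
      congr 1
      funext y
      simp only [thresh]
      have hr := Finset.mem_Icc.mp ht
      rcases Nat.le_one_iff_eq_zero_or_eq_one.mp (hX y) with h0 | h1
      · simp [h0]; omega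
      · simp [h1]; omega
    have := h _ hg x
    simp only [stackOf] at this
    rw [Finset.sum_congr rfl (fun t ht => hth t ht ψt₁),
        Finset.sum_congr rfl (fun t ht => hth t ht ψt₂)] at this
    simp only [Finset.sum_const, Nat.card_Icc] at this
    have hcard : m + 1 - 1 = m := by omega
    rw [hcard] at this
    exact Nat.le_of_mul_le_mul_left (by simpa [mul_comm] using this) hm

end StackMM
end

section
/- Every stack operator ψ is 1-Lipschitz from the L¹ norm to the L∞ norm: for all grey-scale images f and g and every x ∈ E, |ψ(f)(x) − ψ(g)(x)| ≤ Σ_{y ∈ E} |f(y) − g(y)|, where the right-hand side is the (possibly infinite) sum over E, taken in the extended nonnegative reals. -/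
namespace StackMM

variable {E : Type*}

variable [AddCommGroup E]

/-- Auxiliary: one-step Lipschitz bound. -/
lemma stack_step {E : Type*} (m : ℕ) (hm : 0 < m) (ψ : (E → ℕ) → E → ℕ)
    (hstack : IsStackOp m ψ) (f g : E → ℕ) (hf : IsGrey m f) (hg : IsGrey m g)
    (z : E) (hsame : ∀ y, y ≠ z → f y = g y) (hz : g z = f z + 1) (x : E) :
    ((ψ f x : ℤ) - (ψ g x : ℤ)).natAbs ≤ 1 := by
  obtain ⟨him, hbin, hsum⟩ := hstack
  have hthresh : ∀ t, t ≠ f z + 1 → thresh t f = thresh t g := by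
    intro t ht
    funext y
    by_cases hy : y = z
    · subst hy
      simp only [thresh]
      have : t ≤ f y ↔ t ≤ g y := by omega
      simp [this]
    · simp [thresh, hsame y hy]
  have hkey : ∀ t ∈ Finset.Icc 1 m, t ≠ f z + 1 →
      ψ (fun y => m * thresh t f y) x = ψ (fun y => m * thresh t g y) x := by
    intro t _ ht
    rw [hthresh t ht]
  -- each term is 0 or m
  have hterm : ∀ (h : E → ℕ) t, ψ (fun y => m * thresh t h y) x = 0 ∨
      ψ (fun y => m * thresh t h y) x = m := by
    intro h t
    exact hbin (thresh t h) (fun y => by simp [thresh]; split <;> simp) x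
  have hmain : ((m : ℤ) * ψ f x - (m : ℤ) * ψ g x).natAbs ≤ m := by
    have h1 := congrArg (fun n : ℕ => (n : ℤ)) (hsum f hf x)
    have h2 := congrArg (fun n : ℕ => (n : ℤ)) (hsum g hg x)
    push_cast at h1 h2
    rw [h1, h2, ← Finset.sum_sub_distrib]
    have habs : ∀ t ∈ Finset.Icc 1 m,
        |((ψ (fun y => m * thresh t f y) x : ℤ)) - (ψ (fun y => m * thresh t g y) x : ℤ)| ≤
          if t = f z + 1 then (m : ℤ) else 0 := by
      intro t htmem
      by_cases ht : t = f z + 1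
      · subst ht
        simp only [if_pos rfl]
        rcases hterm f (f z + 1) with h | h <;> rcases hterm g (f z + 1) with h' | h' <;>
          rw [h, h'] <;> simp
      · simp only [ht, if_neg, not_false_iff]
        rw [hkey t htmem ht]
        simp
    have habs2 : |∑ t ∈ Finset.Icc 1 m, (((ψ (fun y => m * thresh t f y) x : ℤ))
            - (ψ (fun y => m * thresh t g y) x : ℤ))| ≤ (m : ℤ) :=
      calc |∑ t ∈ Finset.Icc 1 m, (((ψ (fun y => m * thresh t f y) x : ℤ))
              - (ψ (fun y => m * thresh t g y) x : ℤ))|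
          ≤ ∑ t ∈ Finset.Icc 1 m, |(((ψ (fun y => m * thresh t f y) x : ℤ))
              - (ψ (fun y => m * thresh t g y) x : ℤ))| := Finset.abs_sum_le_sum_abs _ _
        _ ≤ ∑ t ∈ Finset.Icc 1 m, (if t = f z + 1 then (m : ℤ) else 0) :=
            Finset.sum_le_sum habs
        _ ≤ (m : ℤ) := by
            rw [Finset.sum_ite_eq' (Finset.Icc 1 m) (f z + 1) (fun _ => (m : ℤ))]
            split <;> simp
    have habs3 : (((∑ t ∈ Finset.Icc 1 m, (((ψ (fun y => m * thresh t f y) x : ℤ))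
            - (ψ (fun y => m * thresh t g y) x : ℤ))).natAbs : ℤ)) ≤ (m : ℤ) := by
      rw [Int.natCast_natAbs]
      exact habs2
    exact_mod_cast habs3
  have : (m : ℤ) * ψ f x - (m : ℤ) * ψ g x = (m : ℤ) * ((ψ f x : ℤ) - ψ g x) := by ring
  rw [this, Int.natAbs_mul, Int.natAbs_natCast] at hmain
  exact Nat.le_of_mul_le_mul_left (by omega) hm

/-- Auxiliary: finite-support Lipschitz bound by induction. -/
lemma stack_lipschitz_aux {E : Type*} (m : ℕ) (hm : 0 < m) (ψ : (E → ℕ) → E → ℕ)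
    (hstack : IsStackOp m ψ) (g : E → ℕ) (hg : IsGrey m g) (x : E) (s : Finset E) :
    ∀ n (f : E → ℕ), IsGrey m f → (∀ y ∉ s, f y = g y) →
      (∑ y ∈ s, ((f y : ℤ) - (g y : ℤ)).natAbs) ≤ n →
      ((ψ f x : ℤ) - (ψ g x : ℤ)).natAbs ≤ n := by
  classical
  intro n
  induction n with
  | zero =>
    intro f hf hout hsum
    have : f = g := by
      funext y
      by_cases hy : y ∈ s
      · have := Finset.sum_eq_zero_iff.mp (Nat.le_zero.mp hsum) y hy
        omega
      · exact hout y hy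
    rw [this]
    simp
  | succ n ih =>
    intro f hf hout hsum
    by_cases hfg : f = g
    · rw [hfg]; simp
    · have hz : ∃ z, f z ≠ g z := by
        by_contra h
        push_neg at h
        exact hfg (funext h)
      obtain ⟨z, hz⟩ := hz
      have hzs : z ∈ s := by
        by_contra h
        exact hz (hout z h)
      set f' : E → ℕ := Function.update f z (if f z < g z then f z + 1 else f z - 1) with hf'
      have hf'z : f' z = if f z < g z then f z + 1 else f z - 1 := by
        simp [hf']
      have hf'y : ∀ y, y ≠ z → f' y = f y := by
        intro y hy
        simp [hf', Function.update_of_ne hy]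
      have hf'grey : IsGrey m f' := by
        intro y
        by_cases hy : y = z
        · subst hy
          rw [hf'z]
          split
          · have := hg y; omega
          · have := hf y; omega
        · rw [hf'y y hy]; exact hf y
      have hstep : ((ψ f x : ℤ) - (ψ f' x : ℤ)).natAbs ≤ 1 := by
        by_cases hc : f z < g z
        · exact stack_step m hm ψ hstack f f' hf hf'grey z
            (fun y hy => (hf'y y hy).symm) (by rw [hf'z]; simp [hc]) x
        · have : ((ψ f' x : ℤ) - (ψ f x : ℤ)).natAbs ≤ 1 :=
            stack_step m hm ψ hstack f' f hf'grey hf z (fun y hy => hf'y y hy)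
              (by rw [hf'z]; simp [hc]; omega) x
          omega
      have hrest : ((ψ f' x : ℤ) - (ψ g x : ℤ)).natAbs ≤ n := by
        apply ih f' hf'grey
        · intro y hy
          have hyz : y ≠ z := fun h => hy (h ▸ hzs)
          rw [hf'y y hyz]
          exact hout y hy
        · have hsplit : ∀ y ∈ s, ((f' y : ℤ) - (g y : ℤ)).natAbs =
              (if y = z then ((f y : ℤ) - g y).natAbs - 1 else ((f y : ℤ) - g y).natAbs) := by
            intro y _
            by_cases hy : y = z
            · subst hy
              rw [if_pos rfl, hf'z]
              split <;> omega
            · rw [hf'y y hy, if_neg hy]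
          rw [Finset.sum_congr rfl hsplit]
          have e1 := Finset.sum_eq_sum_sdiff_singleton_add hzs
            (fun y => if y = z then ((f y : ℤ) - g y).natAbs - 1 else ((f y : ℤ) - g y).natAbs)
          have e2 := Finset.sum_eq_sum_sdiff_singleton_add hzs
            (fun y => ((f y : ℤ) - g y).natAbs)
          have e3 : (∑ y ∈ s \ {z}, if y = z then ((f y : ℤ) - g y).natAbs - 1
                else ((f y : ℤ) - g y).natAbs)
              = ∑ y ∈ s \ {z}, ((f y : ℤ) - g y).natAbs := by
            apply Finset.sum_congr rfl
            intro y hy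
            rw [if_neg (by simp at hy; exact hy.2)]
          have h1 : 1 ≤ ((f z : ℤ) - g z).natAbs := by omega
          rw [e2] at hsum
          rw [e1, e3, if_pos rfl]
          omega
      omega

/-- Corollary 1: a stack operator is 1-Lipschitz from the `L¹` norm to the `L∞` norm. -/
theorem stack_lipschitz {E : Type*} [AddCommGroup E] [Countable E]
    (m : ℕ) (hm : 0 < m) (ψ : (E → ℕ) → E → ℕ) (hstack : IsStackOp m ψ)
    (f g : E → ℕ) (hf : IsGrey m f) (hg : IsGrey m g) (x : E) :
    (((ψ f x : ℤ) - (ψ g x : ℤ)).natAbs : ENNReal) ≤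
      ∑' y : E, (((f y : ℤ) - (g y : ℤ)).natAbs : ENNReal) := by
  by_cases htop : (∑' y : E, (((f y : ℤ) - (g y : ℤ)).natAbs : ENNReal)) = ⊤
  · rw [htop]; exact le_top
  · -- the set of differences is finite
    have hfin : {y : E | f y ≠ g y}.Finite := by
      by_contra hinf
      apply htop
      rw [← top_le_iff]
      have h1 : (⊤ : ENNReal) = ∑' _ : {y : E | f y ≠ g y}, (1 : ENNReal) := by
        haveI : Infinite {y : E | f y ≠ g y} := Set.infinite_coe_iff.mpr hinf
        rw [ENNReal.tsum_const_eq_top_of_ne_zero (by norm_num)]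
      rw [h1]
      calc (∑' y : {y : E | f y ≠ g y}, (1 : ENNReal))
          ≤ ∑' y : {y : E | f y ≠ g y}, (((f y.1 : ℤ) - (g y.1 : ℤ)).natAbs : ENNReal) := by
            apply ENNReal.tsum_le_tsum
            intro y
            have : f y.1 ≠ g y.1 := y.2
            have : 1 ≤ ((f y.1 : ℤ) - (g y.1 : ℤ)).natAbs := by omega
            exact_mod_cast Nat.one_le_cast.mpr this
        _ ≤ ∑' y : E, (((f y : ℤ) - (g y : ℤ)).natAbs : ENNReal) :=
            ENNReal.tsum_comp_le_tsum_of_injective Subtype.val_injective _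
    set s := hfin.toFinset with hs
    have hout : ∀ y ∉ s, f y = g y := by
      intro y hy
      by_contra h
      exact hy (hfin.mem_toFinset.mpr h)
    have hmain := stack_lipschitz_aux m hm ψ hstack g hg x s
      (∑ y ∈ s, ((f y : ℤ) - (g y : ℤ)).natAbs) f hf hout le_rfl
    have htsum : (∑' y : E, (((f y : ℤ) - (g y : ℤ)).natAbs : ENNReal)) =
        ∑ y ∈ s, (((f y : ℤ) - (g y : ℤ)).natAbs : ENNReal) := by
      apply tsum_eq_sum
      intro y hy
      have := hout y hy
      simp [this]
    rw [htsum]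
    calc ((((ψ f x : ℤ) - (ψ g x : ℤ)).natAbs : ℕ) : ENNReal)
        ≤ ((∑ y ∈ s, ((f y : ℤ) - (g y : ℤ)).natAbs : ℕ) : ENNReal) := by
          exact_mod_cast hmain
      _ = ∑ y ∈ s, (((f y : ℤ) - (g y : ℤ)).natAbs : ENNReal) := by push_cast; rfl

end StackMM
end

section
/- Let ψ be a stack operator and let ψ̃ = F⁻¹(ψ) be its characteristic set operator. Then ψ is a W-operator (translation-invariant and locally defined within the window W) if, and only if, ψ̃ is a W-operator on binary images (translation-invariant and locally defined within W). -/
namespace StackMM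

variable {E : Type*}

variable [AddCommGroup E]

/-- Proposition 3: a stack operator is a W-operator iff its characteristic set operator is. -/
theorem stack_WOp_iff {E : Type*} [AddCommGroup E] [Countable E]
    (m : ℕ) (hm : 0 < m) (W : E → ℕ) (hW : IsBinary W)
    (ψ : (E → ℕ) → E → ℕ) (hstack : IsStackOp m ψ) :
    IsWOp m W ψ ↔ IsSetWOp W (charOp m ψ) := by

  obtain ⟨hgrey, hb0m, hdecomp⟩ := hstack
  have hthreshbin : ∀ (t : ℕ) (f : E → ℕ), IsBinary (thresh t f) := by
    intro t f x; unfold thresh; split <;> simp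
  have hb : ∀ X : E → ℕ, IsBinary X → ∀ x,
      ψ (fun y => m * X y) x = m * charOp m ψ X x := by
    intro X hX x
    rcases hb0m X hX x with h | h <;> simp [charOp, h, Nat.div_self hm]
  have hsum : ∀ f : E → ℕ, IsGrey m f → ∀ x,
      ψ f x = ∑ t ∈ Finset.Icc 1 m, charOp m ψ (thresh t f) x := by
    intro f hf x
    have h := hdecomp f hf x
    rw [Finset.sum_congr rfl (fun t _ => hb (thresh t f) (hthreshbin t f) x),
        ← Finset.mul_sum] at h
    exact Nat.eq_of_mul_eq_mul_left hm h
  have hXg : ∀ X : E → ℕ, IsBinary X → IsGrey m (fun y => m * X y) := by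
    intro X hX y
    calc m * X y ≤ m * 1 := Nat.mul_le_mul_left m (hX y)
    _ = m := Nat.mul_one m
  constructor
  · rintro ⟨hti, hloc⟩
    constructor
    · intro X hX h
      funext x
      have h2 := hti (fun y => m * X y) (hXg X hX) h
      simp only [charOp]
      rw [show (fun y => m * X (y + h)) = (fun y => (fun z => m * X z) (y + h)) from rfl,
        h2]
    · intro X hX x
      have h2 := hloc (fun y => m * X y) (hXg X hX) x
      simp only [charOp]
      rw [h2]
      congr 2
      funext y
      simp only [restrictTo]
      split <;> simp
  · rintro ⟨hti, hloc⟩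
    constructor
    · intro f hf h
      funext x
      have hfg : IsGrey m fun y => f (y + h) := fun y => hf _
      rw [hsum _ hfg x, hsum f hf (x + h)]
      refine Finset.sum_congr rfl fun t _ => ?_
      have e : thresh t (fun y => f (y + h)) = fun y => thresh t f (y + h) := rfl
      rw [e, hti (thresh t f) (hthreshbin t f) h]
    · intro f hf x
      have hrg : IsGrey m (restrictTo (fun y => W (y - x)) f) := by
        intro y; unfold restrictTo; split
        · exact hf y
        · exact Nat.zero_le _
      rw [hsum f hf x, hsum _ hrg x]
      refine Finset.sum_congr rfl fun t ht => ?_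
      have ht1 : 1 ≤ t := (Finset.mem_Icc.mp ht).1
      rw [hloc (thresh t f) (hthreshbin t f) x]
      congr 1
      funext y
      simp only [thresh, restrictTo]
      split_ifs <;> omega

end StackMM
end

section
/- Let 𝒳 be any set of elements of P(W). Then for every t ∈ {1,…,m}: {f ∈ P_M(W) : #{s ∈ {1,…,m} : T_s[f] ∈ 𝒳} ≥ t} = {Σ_{s=1}^{m} X_s : X_1,…,X_m ∈ P(W), X_m ≤ X_{m−1} ≤ ⋯ ≤ X_1, and #{s ∈ {1,…,m} : X_s ∈ 𝒳} ≥ t}. Moreover, the inverse identity holds: {X ∈ P(W) : #{s ∈ {1,…,m} : T_s[m·X] ∈ 𝒳} ≥ m} = 𝒳. -/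
namespace StackMM

variable {E : Type*}

variable [AddCommGroup E]

open Classical

/-- Lemma 2: description of the kernel isomorphism `H` between kernels of set W-operators
and kernels of stack W-operators, together with its inverse. -/
theorem kernel_iso {E : Type*} [AddCommGroup E] [Countable E]
    (m : ℕ) (hm : 0 < m) (W : E → ℕ) (hW : IsBinary W)
    (𝒳 : Set (E → ℕ)) (h𝒳 : ∀ X ∈ 𝒳, IsBinary X ∧ SuppIn W X)
    (t : ℕ) (ht : t ∈ Finset.Icc 1 m) :
    ({f : E → ℕ | IsGrey m f ∧ SuppIn W f ∧
        t ≤ ∑ s ∈ Finset.Icc 1 m, if thresh s f ∈ 𝒳 then 1 else 0} =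
      {g : E → ℕ | ∃ X : ℕ → E → ℕ,
        (∀ s ∈ Finset.Icc 1 m, IsBinary (X s) ∧ SuppIn W (X s)) ∧
        (∀ s₁ ∈ Finset.Icc 1 m, ∀ s₂ ∈ Finset.Icc 1 m, s₁ ≤ s₂ → ∀ x, X s₂ x ≤ X s₁ x) ∧
        t ≤ (∑ s ∈ Finset.Icc 1 m, if X s ∈ 𝒳 then 1 else 0) ∧
        g = fun x => ∑ s ∈ Finset.Icc 1 m, X s x}) ∧
    {X : E → ℕ | IsBinary X ∧ SuppIn W X ∧
        m ≤ ∑ s ∈ Finset.Icc 1 m, if thresh s (fun y => m * X y) ∈ 𝒳 then 1 else 0} = 𝒳 := by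
  obtain ⟨ht1, htm⟩ := Finset.mem_Icc.mp ht
  constructor
  · ext g
    simp only [Set.mem_setOf_eq]
    constructor
    · rintro ⟨hg, hs, hc⟩
      refine ⟨fun s => thresh s g, ?_, ?_, hc, ?_⟩
      · intro s hs'
        obtain ⟨hs1, _⟩ := Finset.mem_Icc.mp hs'
        constructor
        · intro x; simp only [thresh]; split <;> simp
        · intro x hx; simp only [thresh]; rw [hs x hx]
          simp only [ite_eq_right_iff]; omega
      · intro s₁ _ s₂ _ hle x
        simp only [thresh]
        by_cases h : s₂ ≤ g x
        · simp [h, le_trans hle h]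
        · simp [h]
      · funext x
        have hsum : ∑ s ∈ Finset.Icc 1 m, thresh s g x = g x := by
          simp only [thresh]
          rw [← Finset.sum_filter]
          have hf : Finset.filter (fun s => s ≤ g x) (Finset.Icc 1 m)
              = Finset.Icc 1 (g x) := by
            ext s
            simp only [Finset.mem_filter, Finset.mem_Icc]
            have := hg x; omega
          simp [hf, Nat.card_Icc]
        exact hsum.symm
    · rintro ⟨X, hbin, hmono, hcount, rfl⟩
      have key : ∀ s ∈ Finset.Icc 1 m, ∀ x,
          thresh s (fun x => ∑ s' ∈ Finset.Icc 1 m, X s' x) x = X s x := by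
        intro s hsm x
        obtain ⟨hs1, hsm'⟩ := Finset.mem_Icc.mp hsm
        show (if s ≤ ∑ s' ∈ Finset.Icc 1 m, X s' x then 1 else 0) = X s x
        rcases Nat.le_one_iff_eq_zero_or_eq_one.mp ((hbin s hsm).1 x) with h1 | h1
        · have hub : ∑ s' ∈ Finset.Icc 1 m, X s' x
              ≤ ∑ s' ∈ Finset.Icc 1 m, (if s' < s then 1 else 0) := by
            apply Finset.sum_le_sum
            intro i hi
            by_cases hcase : i < s
            · simp only [if_pos hcase]; exact (hbin i hi).1 x
            · have : X i x ≤ X s x := hmono s hsm i hi (by omega) x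
              simp only [if_neg hcase]; omega
          rw [← Finset.sum_filter] at hub
          have hf : Finset.filter (fun s' => s' < s) (Finset.Icc 1 m)
              = Finset.Icc 1 (s - 1) := by
            ext i; simp only [Finset.mem_filter, Finset.mem_Icc]; omega
          rw [hf] at hub
          simp only [Finset.sum_const, smul_eq_mul, mul_one, Nat.card_Icc] at hub
          rw [h1, if_neg (by omega)]
        · have hlb : ∑ s' ∈ Finset.Icc 1 m, (if s' ≤ s then 1 else 0)
              ≤ ∑ s' ∈ Finset.Icc 1 m, X s' x := by
            apply Finset.sum_le_sum
            intro i hi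
            by_cases hcase : i ≤ s
            · have : X s x ≤ X i x := hmono i hi s hsm hcase x
              simp only [if_pos hcase]; omega
            · simp [hcase]
          rw [← Finset.sum_filter] at hlb
          have hf : Finset.filter (fun s' => s' ≤ s) (Finset.Icc 1 m)
              = Finset.Icc 1 s := by
            ext i; simp only [Finset.mem_filter, Finset.mem_Icc]; omega
          rw [hf] at hlb
          simp only [Finset.sum_const, smul_eq_mul, mul_one, Nat.card_Icc] at hlb
          rw [h1, if_pos (by omega)]
      refine ⟨?_, ?_, ?_⟩
      · intro x
        calc ∑ s ∈ Finset.Icc 1 m, X s x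
            ≤ ∑ s ∈ Finset.Icc 1 m, 1 :=
              Finset.sum_le_sum fun s hs => (hbin s hs).1 x
          _ = m := by simp [Nat.card_Icc]
      · intro x hx
        exact Finset.sum_eq_zero fun s hs => (hbin s hs).2 x hx
      · calc t ≤ ∑ s ∈ Finset.Icc 1 m, if X s ∈ 𝒳 then 1 else 0 := hcount
          _ = ∑ s ∈ Finset.Icc 1 m,
              if thresh s (fun x => ∑ s' ∈ Finset.Icc 1 m, X s' x) ∈ 𝒳 then 1 else 0 := by
            apply Finset.sum_congr rfl
            intro s hs
            congr 1
            exact congrArg (· ∈ 𝒳) (funext fun x => (key s hs x).symm) |>.symm ▸ rfl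
  · ext X
    simp only [Set.mem_setOf_eq]
    have hT : ∀ X : E → ℕ, IsBinary X → ∀ s ∈ Finset.Icc 1 m,
        thresh s (fun y => m * X y) = X := by
      intro X hb s hs
      obtain ⟨hs1, hsm⟩ := Finset.mem_Icc.mp hs
      funext x
      rcases Nat.le_one_iff_eq_zero_or_eq_one.mp (hb x) with h | h <;>
        · simp only [thresh, h, mul_zero, mul_one]; split <;> omega
    constructor
    · rintro ⟨hb, hsupp, hc⟩
      by_contra hX
      have : ∑ s ∈ Finset.Icc 1 m, (if thresh s (fun y => m * X y) ∈ 𝒳 then 1 else 0) = 0 := by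
        apply Finset.sum_eq_zero
        intro s hs
        rw [hT X hb s hs, if_neg hX]
      omega
    · intro hX
      obtain ⟨hb, hsupp⟩ := h𝒳 X hX
      refine ⟨hb, hsupp, ?_⟩
      have : ∑ s ∈ Finset.Icc 1 m, (if thresh s (fun y => m * X y) ∈ 𝒳 then 1 else 0)
          = ∑ s ∈ Finset.Icc 1 m, 1 := by
        apply Finset.sum_congr rfl
        intro s hs
        rw [hT X hb s hs, if_pos hX]
      rw [this]; simp [Nat.card_Icc]

end StackMM
end
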